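/- arXiv:2409.04101 — 10 statements merged into one kernel-verified Lean document; each statement's English description precedes it below -/
import Mathlib

section
/- For the square loss, for every fixed t ≥ 0 with t ≠ 1, the f-function satisfies lim_{π→0⁺} f^π(t)/(π(1−t)) = 1; that is, π(1−t) is the f-function of the square loss under ultra-imbalanced classification. -/
open Filter Topology

/-- Pointwise Bayes risk of the square loss: `L̄(η) = η (1-η)`. -/
noncomputable def squareBayesRisk (η : ℝ) : ℝ := η * (1 - η)

/-- The f-function of a loss with pointwise Bayes risk `L` at prior `π`:
`f^π(t) = L(π) - (π t + 1 - π) · L(π t / (π t + 1 - π))`. -/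
noncomputable def fFun (L : ℝ → ℝ) (π t : ℝ) : ℝ :=
  L π - (π * t + 1 - π) * L (π * t / (π * t + 1 - π))

/-- For the square loss and every fixed `t ≥ 0` with `t ≠ 1`,
`lim_{π→0⁺} f^π(t) / (π (1-t)) = 1`: the function `π (1-t)` is the f-function
of the square loss under ultra-imbalanced classification. -/
theorem square_loss_fFun_UIC (t : ℝ) (ht : 0 ≤ t) (ht1 : t ≠ 1) :
    Tendsto (fun π : ℝ => fFun squareBayesRisk π t / (π * (1 - t)))
      (𝓝[>] 0) (𝓝 1) := by
  have h1t : (1 : ℝ) - t ≠ 0 := sub_ne_zero.mpr (Ne.symm ht1)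
  have hδ : (0 : ℝ) < 1 / (1 + |1 - t|) := by positivity
  have hlim : Tendsto (fun π : ℝ => (1 - π) ^ 2 / (π * t + 1 - π)) (𝓝[>] 0) (𝓝 1) := by
    have h : Tendsto (fun π : ℝ => (1 - π) ^ 2 / (π * t + 1 - π)) (𝓝 0)
        (𝓝 (((1 : ℝ) - 0) ^ 2 / (0 * t + 1 - 0))) := by
      apply Tendsto.div
      · exact ((tendsto_const_nhds.sub tendsto_id).pow 2)
      · exact ((tendsto_id.mul tendsto_const_nhds).add tendsto_const_nhds).sub tendsto_id
      · norm_num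
    simpa using h.mono_left nhdsWithin_le_nhds
  refine hlim.congr' ?_
  filter_upwards [Ioo_mem_nhdsGT_of_mem (Set.mem_Ico.mpr ⟨le_refl 0, hδ⟩)] with π hπ
  obtain ⟨hπ0, hπδ⟩ := hπ
  have hD : π * t + 1 - π ≠ 0 := by
    have h1 : π * |1 - t| < 1 := by
      calc π * |1 - t| < (1 / (1 + |1 - t|)) * (1 + |1 - t|) := by
            rcases eq_or_lt_of_le (abs_nonneg (1 - t)) with h | h
            · rw [← h, mul_zero]; positivity
            · exact mul_lt_mul hπδ (by linarith) h (le_of_lt hδ)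
          _ = 1 := by field_simp
    have h2 : |π * (1 - t)| < 1 := by
      rwa [abs_mul, abs_of_pos hπ0]
    have h3 : π * (1 - t) < 1 := lt_of_le_of_lt (le_abs_self _) h2
    intro h
    have : π * (1 - t) = 1 := by linarith [h]
    linarith
  simp only [fFun, squareBayesRisk]
  field_simp
  ring
end

section
/- For the cross entropy loss, for every fixed t > 0 with t ≠ 1, the f-function f^π(t) = L̄(π) − (πt+1−π)·L̄(πt/(πt+1−π)), where L̄(η) = −η log η − (1−η) log(1−η), satisfies lim_{π→0⁺} f^π(t)/(−π log(π)(1−t)) = 1; that is, −π log(π)(1−t) is the f-function of cross entropy under ultra-imbalanced classification. -/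
/-!
Write `L̄ = negMulLog η + negMulLog (1 - η)` and `s = π t + 1 - π`. Since
`negMulLog (x y) = y negMulLog x + x negMulLog y`, the f-function collapses to
`f^π(t) = (1 - t) negMulLog π - π negMulLog t + negMulLog s`.
The last two terms vanish at `π = 0` and are differentiable there, so they are `O(π)`, while
`π = o(negMulLog π) = o(-π log π)` because `log π → -∞`. Hence `f^π(t) ~ -π log π (1 - t)`.
-/

open Filter Topology

/-- Pointwise Bayes risk of the cross entropy loss: the binary entropy
`L̄(η) = -η log η - (1-η) log (1-η)`. -/
noncomputable def ceBayesRisk (η : ℝ) : ℝ :=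
  -η * Real.log η - (1 - η) * Real.log (1 - η)

open Asymptotics
open Real (negMulLog negMulLog_mul log)

lemma ceBayesRisk_eq_negMulLog (η : ℝ) :
    ceBayesRisk η = negMulLog η + negMulLog (1 - η) := by
  simp only [ceBayesRisk, negMulLog]
  ring

lemma mul_negMulLog_div {a s : ℝ} (hs : s ≠ 0) :
    s * negMulLog (a / s) = negMulLog a - a / s * negMulLog s := by
  have h := negMulLog_mul (a / s) s
  rw [div_mul_cancel₀ a hs] at h
  linarith

lemma fFun_ceBayesRisk {π t : ℝ} (hs : π * t + 1 - π ≠ 0) :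
    fFun ceBayesRisk π t
      = (1 - t) * negMulLog π - π * negMulLog t + negMulLog (π * t + 1 - π) := by
  have h_compl : 1 - π * t / (π * t + 1 - π) = (1 - π) / (π * t + 1 - π) := by
    field_simp
    ring
  rw [fFun, ceBayesRisk_eq_negMulLog, ceBayesRisk_eq_negMulLog, h_compl, mul_add,
    mul_negMulLog_div hs, mul_negMulLog_div hs, negMulLog_mul]
  field_simp
  ring

lemma fFun_ceBayesRisk_sub_isBigO (t : ℝ) :
    (fun π => fFun ceBayesRisk π t - (1 - t) * negMulLog π) =O[𝓝 0] fun π => π := by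
  have h_diff : DifferentiableAt ℝ (fun π => negMulLog (π * t + 1 - π) - π * negMulLog t) 0 := by
    fun_prop (disch := simp)
  have hs : ∀ᶠ π in 𝓝 (0 : ℝ), π * t + 1 - π ≠ 0 :=
    (show ContinuousAt (fun π : ℝ => π * t + 1 - π) 0 by fun_prop).eventually_ne (by simp)
  refine h_diff.isBigO_sub.congr' ?_ (by simp only [sub_zero, EventuallyEq.refl])
  filter_upwards [hs] with π hπ
  simp only [fFun_ceBayesRisk hπ, zero_mul, zero_add, sub_zero, Real.negMulLog_one, sub_self]
  ring

lemma isLittleO_id_negMulLog : (fun x : ℝ => x) =o[𝓝[>] 0] negMulLog := by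
  have h : (fun _ => (1 : ℝ)) =o[𝓝[>] 0] fun x => -log x :=
    (isLittleO_one_left_iff ℝ).2 <| tendsto_abs_atTop_atTop.comp <|
      tendsto_neg_atBot_atTop.comp Real.tendsto_log_nhdsGT_zero
  simpa only [mul_one, mul_neg, Real.negMulLog_eq_neg] using
    (isBigO_refl (fun x : ℝ => x) (𝓝[>] 0)).mul_isLittleO h

theorem cross_entropy_fFun_UIC_general (t : ℝ) (ht1 : t ≠ 1) :
    Tendsto (fun π : ℝ => fFun ceBayesRisk π t / (-π * Real.log π * (1 - t)))
      (𝓝[>] 0) (𝓝 1) := by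
  have h1t : 1 - t ≠ 0 := sub_ne_zero.2 ht1.symm
  have h_equiv : (fun π => fFun ceBayesRisk π t) ~[𝓝[>] 0] fun π => (1 - t) * negMulLog π :=
    ((fFun_ceBayesRisk_sub_isBigO t).mono nhdsWithin_le_nhds).trans_isLittleO
      (isLittleO_id_negMulLog.const_mul_right h1t)
  have h_ne : ∀ᶠ π in 𝓝[>] (0 : ℝ), (1 - t) * negMulLog π ≠ 0 := by
    filter_upwards [Ioo_mem_nhdsGT zero_lt_one] with π hπ
    rw [Real.negMulLog_eq_neg]
    exact mul_ne_zero h1t (neg_ne_zero.2 (Real.mul_log_neg hπ.1 hπ.2).ne)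
  convert (isEquivalent_iff_tendsto_one h_ne).1 h_equiv using 2 with π
  simp only [Pi.div_apply, Real.negMulLog]
  ring

/-- For the cross entropy loss and every fixed `t > 0` with `t ≠ 1`,
`lim_{π→0⁺} f^π(t) / (-π log(π) (1-t)) = 1`: the function `-π log(π) (1-t)` is
the f-function of cross entropy under ultra-imbalanced classification. -/
theorem cross_entropy_fFun_UIC (t : ℝ) (ht : 0 < t) (ht1 : t ≠ 1) :
    Tendsto (fun π : ℝ => fFun ceBayesRisk π t / (-π * Real.log π * (1 - t)))
      (𝓝[>] 0) (𝓝 1) :=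
  cross_entropy_fFun_UIC_general t ht1
end

section
/- Fix γ > 0. For each η ∈ (0,1) sufficiently small, let η̂(η) ∈ (0,1) be a solution of the equation η̂^γ · (η̂ − γ log(1−η̂)) = η with η̂(η) → 0 as η → 0⁺. Then lim_{η→0⁺} η̂(η) / (η/(1+γ))^{1/(γ+1)} = 1. -/
/-!
Write `x = e η` and `L = log (1 - x)`. The equation gives
`η / (1 + γ) = x ^ (γ + 1) / r` with `r = (1 + γ) / (1 - γ L / x)`, so the quotient in question
is exactly `r ^ (1 / (γ + 1))`. Since `L / x → -1` as `x → 0`, `r → 1`.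
-/

open Filter Topology Real

lemma tendsto_log_one_sub_div_self :
    Tendsto (fun y : ℝ => log (1 - y) / y) (𝓝[≠] 0) (𝓝 (-1)) := by
  have hderiv : HasDerivAt (fun y : ℝ => log (1 - y)) (-1) 0 := by
    simpa using ((hasDerivAt_id (0 : ℝ)).const_sub 1).log (by norm_num)
  refine (hasDerivAt_iff_tendsto_slope.mp hderiv).congr' ?_
  filter_upwards [self_mem_nhdsWithin] with y hy
  simp [slope_def_field]

lemma self_div_rpow_div_one_div {x p b : ℝ} (hx : 0 < x) (hb : 0 ≤ b) (hp : p ≠ 0) :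
    x / (x ^ p / b) ^ (1 / p) = b ^ (1 / p) := by
  have hroot : (x ^ p) ^ (1 / p) = x := by
    rw [← rpow_mul hx.le, mul_one_div_cancel hp, rpow_one]
  rw [div_rpow (rpow_nonneg hx.le p) hb, hroot, div_div_cancel₀ hx.ne']

noncomputable def focalRatio (γ x : ℝ) : ℝ :=
  (1 + γ) / (1 - γ * (log (1 - x) / x))

lemma tendsto_focalRatio {γ : ℝ} (hγ : 1 + γ ≠ 0) :
    Tendsto (focalRatio γ) (𝓝[≠] 0) (𝓝 1) := by
  have hden : Tendsto (fun x => 1 - γ * (log (1 - x) / x)) (𝓝[≠] 0) (𝓝 (1 + γ)) := by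
    simpa using (tendsto_log_one_sub_div_self.const_mul γ).const_sub 1
  rw [← div_self hγ]
  exact tendsto_const_nhds.div hden hγ

lemma rpow_mul_sub_log_div_eq {γ x : ℝ} (hγ : 1 + γ ≠ 0) (hx : 0 < x) :
    x ^ γ * (x - γ * log (1 - x)) / (1 + γ) = x ^ (γ + 1) / focalRatio γ x := by
  rw [focalRatio, rpow_add_one hx.ne']
  field_simp

/-- Fix `γ > 0`. If for each sufficiently small `η ∈ (0,1)` the value
`e η ∈ (0,1)` solves the focal-loss first-order optimality equation
`(e η)^γ · (e η - γ log(1 - e η)) = η`, and `e η → 0` as `η → 0⁺`, then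
`lim_{η→0⁺} e η / (η/(1+γ))^{1/(γ+1)} = 1`. -/
theorem focal_loss_minimizer_asymptotics (γ : ℝ) (hγ : 0 < γ) (e : ℝ → ℝ)
    (h_sol : ∀ᶠ η in 𝓝[>] (0 : ℝ),
      e η ∈ Set.Ioo (0 : ℝ) 1 ∧ (e η) ^ γ * (e η - γ * Real.log (1 - e η)) = η)
    (h_lim : Tendsto e (𝓝[>] (0 : ℝ)) (𝓝 0)) :
    Tendsto (fun η : ℝ => e η / (η / (1 + γ)) ^ (1 / (γ + 1)))
      (𝓝[>] (0 : ℝ)) (𝓝 1) := by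
  have hγ' : 1 + γ ≠ 0 := by positivity
  have he : Tendsto e (𝓝[>] 0) (𝓝[≠] 0) :=
    tendsto_nhdsWithin_iff.mpr ⟨h_lim, h_sol.mono fun _ h => h.1.1.ne'⟩
  have hratio := (tendsto_focalRatio hγ').comp he
  have hpos : ∀ᶠ η in 𝓝[>] 0, 0 < focalRatio γ (e η) := hratio.eventually (lt_mem_nhds one_pos)
  have hroot := hratio.rpow_const (p := 1 / (γ + 1)) (Or.inl one_ne_zero)
  rw [one_rpow] at hroot
  refine hroot.congr' ?_
  filter_upwards [h_sol, hpos] with η ⟨⟨hx, _⟩, hη⟩ hpos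
  have hquot : η / (1 + γ) = e η ^ (γ + 1) / focalRatio γ (e η) := by
    rw [← rpow_mul_sub_log_div_eq hγ' hx, hη]
  rw [Function.comp_apply, hquot, self_div_rpow_div_one_div hx hpos.le (by positivity)]
end

section
/- Fix γ > 0. The pointwise Bayes risk of the focal loss satisfies lim_{η→0⁺} L̄(η) / (−η log(η)/(γ+1)) = 1, where L̄(η) = inf_{η̂∈(0,1)} [−η log(η̂)(1−η̂)^γ − (1−η) log(1−η̂) η̂^γ]. -/
open Filter Topology

/-- The pointwise risk of the focal loss with parameter `γ` at class
probability `η` and prediction `v`: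
`-η log(v) (1-v)^γ - (1-η) log(1-v) v^γ`. -/
noncomputable def focalPointwiseRisk (γ η v : ℝ) : ℝ :=
  -η * Real.log v * (1 - v) ^ γ - (1 - η) * Real.log (1 - v) * v ^ γ

/-- Pointwise Bayes risk of the focal loss: infimum of the pointwise risk
over predictions in `(0,1)`. -/
noncomputable def focalBayesRisk (γ η : ℝ) : ℝ :=
  sInf (focalPointwiseRisk γ η '' Set.Ioo (0 : ℝ) 1)

/- Auxiliary definitions for the squeeze argument. -/

/-- The normalization `-η log η / (γ+1)`. -/
noncomputable def focalG (γ η : ℝ) : ℝ := -η * Real.log η / (γ + 1)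

/-- Threshold `t(η) = (η (-log η))^(1/(γ+1))`. -/
noncomputable def focalT (γ η : ℝ) : ℝ := (η * (-Real.log η)) ^ (1/(γ+1))

/-- Lower comparison function, tending to `1`. -/
noncomputable def focalA (γ η : ℝ) : ℝ :=
  min 1 ((1 - Real.log (-Real.log η) / (-Real.log η)) * (1 - focalT γ η) ^ γ)

/-- Upper comparison function, tending to `1`. -/
noncomputable def focalB (γ η : ℝ) : ℝ :=
  (1 - η ^ (1/(γ+1))) ^ γ + 2 * (γ + 1) / (-Real.log η)

lemma focalRisk_nonneg (γ : ℝ) {η v : ℝ} (hη0 : 0 ≤ η) (hη1 : η ≤ 1)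
    (hv : v ∈ Set.Ioo (0:ℝ) 1) : 0 ≤ focalPointwiseRisk γ η v := by
  obtain ⟨hv0, hv1⟩ := hv
  have h1 : Real.log v ≤ 0 := Real.log_nonpos hv0.le hv1.le
  have h2 : Real.log (1 - v) ≤ 0 := Real.log_nonpos (by linarith) (by linarith)
  have p1 : (0:ℝ) ≤ (1 - v) ^ γ := Real.rpow_nonneg (by linarith) _
  have p2 : (0:ℝ) ≤ v ^ γ := Real.rpow_nonneg hv0.le _
  have t1 : 0 ≤ -η * Real.log v * (1 - v) ^ γ := by
    apply mul_nonneg _ p1; nlinarith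
  have t2 : 0 ≤ -((1 - η) * Real.log (1 - v) * v ^ γ) := by
    rw [neg_nonneg]; apply mul_nonpos_of_nonpos_of_nonneg _ p2; nlinarith
  unfold focalPointwiseRisk; linarith

lemma focalG_pos (γ : ℝ) (hγ : 0 < γ) {η : ℝ} (hη0 : 0 < η) (hη1 : η < 1) :
    0 < focalG γ η := by
  have hl : Real.log η < 0 := Real.log_neg hη0 hη1
  unfold focalG
  apply div_pos (by nlinarith) (by linarith)

lemma focal_point_lower (γ : ℝ) (hγ : 0 < γ) {η : ℝ} (hη0 : 0 < η)
    (hη1 : η ≤ γ / (γ + 1)) (ht1 : η * (-Real.log η) < 1)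
    {v : ℝ} (hv : v ∈ Set.Ioo (0:ℝ) 1) :
    focalA γ η * focalG γ η ≤ focalPointwiseRisk γ η v := by
  obtain ⟨hv0, hv1⟩ := hv
  have hγ1 : (0:ℝ) < γ + 1 := by linarith
  have hηlt1 : η < 1 := lt_of_le_of_lt hη1 (by rw [div_lt_one hγ1]; linarith)
  have hlog : Real.log η < 0 := Real.log_neg hη0 hηlt1
  set L : ℝ := -Real.log η with hL
  have hL0 : 0 < L := by simp [hL]; linarith
  have hηL0 : 0 < η * L := mul_pos hη0 hL0
  set t : ℝ := focalT γ η with htdef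
  have ht0 : 0 < t := Real.rpow_pos_of_pos hηL0 _
  have htlt1 : t < 1 := Real.rpow_lt_one hηL0.le ht1 (by positivity)
  have hg : focalG γ η = η * L / (γ + 1) := by
    unfold focalG; rw [hL]; ring
  have hg0 : 0 < focalG γ η := focalG_pos γ hγ hη0 hηlt1
  -- the three key nonneg terms
  have hlog1v : Real.log (1 - v) ≤ -v := by
    have := Real.log_le_sub_one_of_pos (show (0:ℝ) < 1 - v by linarith)
    linarith
  rcases le_or_gt t v with hcase | hcase
  · -- large v : second term dominates
    have term1 : 0 ≤ -η * Real.log v * (1 - v) ^ γ := by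
      have h1 : Real.log v ≤ 0 := Real.log_nonpos hv0.le hv1.le
      have p1 : (0:ℝ) ≤ (1 - v) ^ γ := Real.rpow_nonneg (by linarith) _
      apply mul_nonneg _ p1; nlinarith
    have hvg : v ^ (γ + 1) = v ^ γ * v := by
      rw [Real.rpow_add hv0, Real.rpow_one]
    have htg : t ^ (γ + 1) = η * L := by
      rw [htdef]; unfold focalT
      rw [← Real.rpow_mul hηL0.le, one_div,
        inv_mul_cancel₀ (ne_of_gt hγ1), Real.rpow_one]
    have hmono : t ^ (γ + 1) ≤ v ^ (γ + 1) :=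
      Real.rpow_le_rpow ht0.le hcase (by linarith)
    have h1η : 1 / (γ + 1) ≤ 1 - η := by
      have h := (le_div_iff₀ hγ1).mp hη1
      rw [div_le_iff₀ hγ1]
      nlinarith
    have term2 : η * L / (γ + 1) ≤ -((1 - η) * Real.log (1 - v) * v ^ γ) := by
      have hvγ : (0:ℝ) ≤ v ^ γ := Real.rpow_nonneg hv0.le _
      have step1 : (1 - η) * v * v ^ γ ≤ -((1 - η) * Real.log (1 - v) * v ^ γ) := by
        have h1ηnn : (0:ℝ) ≤ 1 - η := by linarith
        nlinarith [mul_nonneg h1ηnn hvγ]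
      have step2 : η * L / (γ + 1) ≤ (1 - η) * v * v ^ γ := by
        have : (1 - η) * (η * L) ≤ (1 - η) * v ^ (γ + 1) := by
          rw [← htg]
          exact mul_le_mul_of_nonneg_left hmono (by linarith)
        rw [hvg] at this
        calc η * L / (γ + 1) = 1 / (γ + 1) * (η * L) := by ring
          _ ≤ (1 - η) * (η * L) := mul_le_mul_of_nonneg_right h1η hηL0.le
          _ ≤ (1 - η) * (v ^ γ * v) := this
          _ = (1 - η) * v * v ^ γ := by ring
      linarith
    have hA1 : focalA γ η ≤ 1 := min_le_left _ _
    have hx0 : 0 < η * L / (γ + 1) := by rw [← hg]; exact hg0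
    have hfin : focalA γ η * focalG γ η ≤ η * L / (γ + 1) := by
      rw [hg]; nlinarith
    unfold focalPointwiseRisk
    linarith
  · -- small v : first term dominates
    have term2 : 0 ≤ -((1 - η) * Real.log (1 - v) * v ^ γ) := by
      have hvγ : (0:ℝ) ≤ v ^ γ := Real.rpow_nonneg hv0.le _
      nlinarith [mul_nonneg (show (0:ℝ) ≤ 1 - η by linarith) hvγ]
    have hlogt : Real.log t = (Real.log η + Real.log L) / (γ + 1) := by
      rw [htdef]; unfold focalT
      rw [Real.log_rpow hηL0, Real.log_mul (ne_of_gt hη0) (ne_of_gt hL0)]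
      ring
    have hlogv : Real.log v ≤ Real.log t := Real.log_le_log hv0 hcase.le
    have hlogtneg : Real.log t < 0 := Real.log_neg ht0 htlt1
    have hpow : (1 - t) ^ γ ≤ (1 - v) ^ γ :=
      Real.rpow_le_rpow (by linarith) (by linarith) hγ.le
    have hpowt : (0:ℝ) ≤ (1 - t) ^ γ := Real.rpow_nonneg (by linarith) _
    have term1 : η * (-Real.log t) * (1 - t) ^ γ ≤ -η * Real.log v * (1 - v) ^ γ := by
      have h1 : η * (-Real.log t) ≤ η * (-Real.log v) :=
        mul_le_mul_of_nonneg_left (by linarith) hη0.le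
      have h2 : 0 ≤ η * (-Real.log t) := by nlinarith
      calc η * (-Real.log t) * (1 - t) ^ γ
          ≤ η * (-Real.log v) * (1 - v) ^ γ := mul_le_mul h1 hpow hpowt (by nlinarith)
        _ = -η * Real.log v * (1 - v) ^ γ := by ring
    have hkey : focalA γ η * focalG γ η ≤ η * (-Real.log t) * (1 - t) ^ γ := by
      have hmin : focalA γ η ≤ (1 - Real.log L / L) * (1 - t) ^ γ := by
        unfold focalA; rw [← hL, ← htdef]; exact min_le_right _ _
      have heq : (1 - Real.log L / L) * (1 - t) ^ γ * focalG γ η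
          = η * (-Real.log t) * (1 - t) ^ γ := by
        have hlogη' : Real.log η = -L := by rw [hL]; ring
        rw [hg, hlogt, hlogη']
        field_simp
        ring
      calc focalA γ η * focalG γ η
          ≤ (1 - Real.log L / L) * (1 - t) ^ γ * focalG γ η :=
            mul_le_mul_of_nonneg_right hmin hg0.le
        _ = η * (-Real.log t) * (1 - t) ^ γ := heq
    unfold focalPointwiseRisk
    linarith

lemma focal_bayes_lower (γ : ℝ) (hγ : 0 < γ) {η : ℝ} (hη0 : 0 < η)
    (hη1 : η ≤ γ / (γ + 1)) (ht1 : η * (-Real.log η) < 1) :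
    focalA γ η * focalG γ η ≤ focalBayesRisk γ η := by
  apply le_csInf
  · exact ⟨focalPointwiseRisk γ η (1/2), ⟨1/2, by norm_num, rfl⟩⟩
  · rintro b ⟨v, hv, rfl⟩
    exact focal_point_lower γ hγ hη0 hη1 ht1 hv

lemma focal_bayes_upper (γ : ℝ) (hγ : 0 < γ) {η : ℝ} (hη0 : 0 < η)
    (hη1 : η < 1) (hv : η ^ (1/(γ+1)) ≤ 1/2) :
    focalBayesRisk γ η ≤ focalB γ η * focalG γ η := by
  have hγ1 : (0:ℝ) < γ + 1 := by linarith
  set v : ℝ := η ^ (1/(γ+1)) with hvdef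
  have hv0 : 0 < v := Real.rpow_pos_of_pos hη0 _
  have hvmem : v ∈ Set.Ioo (0:ℝ) 1 := ⟨hv0, by linarith⟩
  have hlogη : Real.log η < 0 := Real.log_neg hη0 hη1
  have step1 : focalBayesRisk γ η ≤ focalPointwiseRisk γ η v := by
    apply csInf_le
    · exact ⟨0, by rintro b ⟨w, hw, rfl⟩; exact focalRisk_nonneg γ hη0.le hη1.le hw⟩
    · exact ⟨v, hvmem, rfl⟩
  have hlogv : Real.log v = Real.log η / (γ + 1) := by
    rw [hvdef, Real.log_rpow hη0]; ring
  have hvg : v ^ (γ + 1) = η := by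
    rw [hvdef, ← Real.rpow_mul hη0.le, one_div,
      inv_mul_cancel₀ (ne_of_gt hγ1), Real.rpow_one]
  -- bound for the second term
  have hlog1v : -Real.log (1 - v) ≤ 2 * v := by
    have h1 : 1 - (1 - v)⁻¹ ≤ Real.log (1 - v) :=
      Real.one_sub_inv_le_log_of_pos (by linarith)
    have h2 : (1 - v)⁻¹ ≤ 1 + 2 * v := by
      rw [inv_le_iff_one_le_mul₀ (by linarith)]
      nlinarith
    linarith
  have hvγ : (0:ℝ) ≤ v ^ γ := Real.rpow_nonneg hv0.le _
  have hterm2 : -((1 - η) * Real.log (1 - v) * v ^ γ) ≤ 2 * η := by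
    have hvgm : v ^ γ * v = η := by rw [← hvg, Real.rpow_add hv0, Real.rpow_one]
    have h3 : (1 - η) * (-Real.log (1 - v)) * v ^ γ ≤ 1 * (2 * v) * v ^ γ := by
      apply mul_le_mul_of_nonneg_right _ hvγ
      have hlv : Real.log (1 - v) ≤ 0 := Real.log_nonpos (by linarith) (by linarith)
      apply mul_le_mul (by linarith) hlog1v (by linarith) one_pos.le
    calc -((1 - η) * Real.log (1 - v) * v ^ γ)
        = (1 - η) * (-Real.log (1 - v)) * v ^ γ := by ring
      _ ≤ 1 * (2 * v) * v ^ γ := h3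
      _ = 2 * (v ^ γ * v) := by ring
      _ = 2 * η := by rw [hvgm]
  have hterm1 : -η * Real.log v * (1 - v) ^ γ = (1 - v) ^ γ * focalG γ η := by
    rw [hlogv]; unfold focalG; ring
  have hBG : focalB γ η * focalG γ η = (1 - v) ^ γ * focalG γ η + 2 * η := by
    have h1 : Real.log η ≠ 0 := ne_of_lt hlogη
    have h2 : (γ + 1 : ℝ) ≠ 0 := ne_of_gt hγ1
    have hx : 2 * (γ + 1) / (-Real.log η) * (-η * Real.log η / (γ + 1)) = 2 * η := by
      rw [div_mul_div_comm, div_eq_iff (mul_ne_zero (neg_ne_zero.mpr h1) h2)]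
      ring
    unfold focalB focalG
    rw [← hvdef, add_mul, hx]
  have : focalPointwiseRisk γ η v ≤ (1 - v) ^ γ * focalG γ η + 2 * η := by
    unfold focalPointwiseRisk
    rw [← hterm1]
    linarith
  rw [hBG]
  linarith

lemma focalA_tendsto (γ : ℝ) (hγ : 0 < γ) :
    Tendsto (focalA γ) (𝓝[>] (0:ℝ)) (𝓝 1) := by
  have hL : Tendsto (fun x : ℝ => -Real.log x) (𝓝[>] 0) atTop :=
    tendsto_neg_atTop_iff.mpr Real.tendsto_log_nhdsGT_zero
  have hll : Tendsto (fun x : ℝ => Real.log (-Real.log x) / (-Real.log x)) (𝓝[>] 0) (𝓝 0) :=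
    (Real.isLittleO_log_id_atTop.tendsto_div_nhds_zero).comp hL
  have hmul : Tendsto (fun x : ℝ => x * (-Real.log x)) (𝓝[>] 0) (𝓝 0) := by
    have h := (tendsto_log_mul_rpow_nhdsGT_zero one_pos).neg
    rw [neg_zero] at h
    refine h.congr fun x => ?_
    rw [Real.rpow_one]; ring
  have ht : Tendsto (focalT γ) (𝓝[>] (0:ℝ)) (𝓝 0) := by
    have hc : ContinuousAt (fun x : ℝ => x ^ (1/(γ+1))) 0 :=
      Real.continuousAt_rpow_const 0 _ (Or.inr (by positivity))
    have := hc.tendsto.comp hmul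
    rw [Real.zero_rpow (by positivity)] at this
    exact this
  have hpow : Tendsto (fun η : ℝ => (1 - focalT γ η) ^ γ) (𝓝[>] (0:ℝ)) (𝓝 1) := by
    have hc : ContinuousAt (fun x : ℝ => x ^ γ) 1 :=
      Real.continuousAt_rpow_const 1 _ (Or.inl one_ne_zero)
    have hb : Tendsto (fun η : ℝ => 1 - focalT γ η) (𝓝[>] (0:ℝ)) (𝓝 1) := by
      have := (tendsto_const_nhds (x := (1:ℝ)) (f := 𝓝[>] (0:ℝ))).sub ht
      rwa [sub_zero] at this
    have := hc.tendsto.comp hb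
    rwa [Real.one_rpow] at this
  have hfac : Tendsto (fun η : ℝ => 1 - Real.log (-Real.log η) / (-Real.log η))
      (𝓝[>] (0:ℝ)) (𝓝 1) := by
    have := (tendsto_const_nhds (x := (1:ℝ)) (f := 𝓝[>] (0:ℝ))).sub hll
    rwa [sub_zero] at this
  have hprod := hfac.mul hpow
  rw [one_mul] at hprod
  have := (tendsto_const_nhds (x := (1:ℝ)) (f := 𝓝[>] (0:ℝ))).min hprod
  rwa [min_self] at this

lemma focalB_tendsto (γ : ℝ) (hγ : 0 < γ) :
    Tendsto (focalB γ) (𝓝[>] (0:ℝ)) (𝓝 1) := by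
  have hL : Tendsto (fun x : ℝ => -Real.log x) (𝓝[>] 0) atTop :=
    tendsto_neg_atTop_iff.mpr Real.tendsto_log_nhdsGT_zero
  have hv : Tendsto (fun η : ℝ => η ^ (1/(γ+1))) (𝓝[>] (0:ℝ)) (𝓝 0) := by
    have hc : ContinuousAt (fun x : ℝ => x ^ (1/(γ+1))) 0 :=
      Real.continuousAt_rpow_const 0 _ (Or.inr (by positivity))
    have h0 : Tendsto (fun x : ℝ => x) (𝓝[>] (0:ℝ)) (𝓝 0) :=
      tendsto_id.mono_right nhdsWithin_le_nhds
    have := hc.tendsto.comp h0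
    rwa [Real.zero_rpow (by positivity)] at this
  have hpow : Tendsto (fun η : ℝ => (1 - η ^ (1/(γ+1))) ^ γ) (𝓝[>] (0:ℝ)) (𝓝 1) := by
    have hc : ContinuousAt (fun x : ℝ => x ^ γ) 1 :=
      Real.continuousAt_rpow_const 1 _ (Or.inl one_ne_zero)
    have hb : Tendsto (fun η : ℝ => 1 - η ^ (1/(γ+1))) (𝓝[>] (0:ℝ)) (𝓝 1) := by
      have := (tendsto_const_nhds (x := (1:ℝ)) (f := 𝓝[>] (0:ℝ))).sub hv
      rwa [sub_zero] at this
    have := hc.tendsto.comp hb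
    rwa [Real.one_rpow] at this
  have hdiv : Tendsto (fun η : ℝ => 2 * (γ + 1) / (-Real.log η)) (𝓝[>] (0:ℝ)) (𝓝 0) :=
    Tendsto.div_atTop tendsto_const_nhds hL
  have := hpow.add hdiv
  rwa [add_zero] at this

/-- Fix `γ > 0`. The pointwise Bayes risk of the focal loss satisfies
`lim_{η→0⁺} L̄(η) / (-η log(η)/(γ+1)) = 1`. -/
theorem focal_loss_bayes_risk_asymptotics (γ : ℝ) (hγ : 0 < γ) :
    Tendsto (fun η : ℝ => focalBayesRisk γ η / (-η * Real.log η / (γ + 1)))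
      (𝓝[>] (0 : ℝ)) (𝓝 1) := by
  have hγ1 : (0:ℝ) < γ + 1 := by linarith
  have hmul : Tendsto (fun x : ℝ => x * (-Real.log x)) (𝓝[>] 0) (𝓝 0) := by
    have h := (tendsto_log_mul_rpow_nhdsGT_zero one_pos).neg
    rw [neg_zero] at h
    refine h.congr fun x => ?_
    rw [Real.rpow_one]; ring
  have hv : Tendsto (fun η : ℝ => η ^ (1/(γ+1))) (𝓝[>] (0:ℝ)) (𝓝 0) := by
    have hc : ContinuousAt (fun x : ℝ => x ^ (1/(γ+1))) 0 :=
      Real.continuousAt_rpow_const 0 _ (Or.inr (by positivity))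
    have h0 : Tendsto (fun x : ℝ => x) (𝓝[>] (0:ℝ)) (𝓝 0) :=
      tendsto_id.mono_right nhdsWithin_le_nhds
    have := hc.tendsto.comp h0
    rwa [Real.zero_rpow (by positivity)] at this
  -- eventual facts
  have ev1 : ∀ᶠ η in 𝓝[>] (0:ℝ), 0 < η := eventually_mem_nhdsWithin
  have ev2 : ∀ᶠ η in 𝓝[>] (0:ℝ), η ≤ γ / (γ + 1) := by
    have h0 : Tendsto (fun x : ℝ => x) (𝓝[>] (0:ℝ)) (𝓝 0) :=
      tendsto_id.mono_right nhdsWithin_le_nhds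
    exact h0.eventually_le_const (by positivity)
  have ev3 : ∀ᶠ η in 𝓝[>] (0:ℝ), η * (-Real.log η) < 1 :=
    hmul.eventually_lt_const one_pos
  have ev4 : ∀ᶠ η in 𝓝[>] (0:ℝ), η ^ (1/(γ+1)) ≤ 1/2 :=
    hv.eventually_le_const (by norm_num)
  have ev5 : ∀ᶠ η in 𝓝[>] (0:ℝ), η < 1 := by
    have h0 : Tendsto (fun x : ℝ => x) (𝓝[>] (0:ℝ)) (𝓝 0) :=
      tendsto_id.mono_right nhdsWithin_le_nhds
    exact h0.eventually_lt_const one_pos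
  have hlow : ∀ᶠ η in 𝓝[>] (0:ℝ),
      focalA γ η ≤ focalBayesRisk γ η / (-η * Real.log η / (γ + 1)) := by
    filter_upwards [ev1, ev2, ev3, ev5] with η h1 h2 h3 h5
    have hg0 : 0 < focalG γ η := focalG_pos γ hγ h1 h5
    have h := focal_bayes_lower γ hγ h1 h2 h3
    have hgeq : -η * Real.log η / (γ + 1) = focalG γ η := rfl
    rw [hgeq, le_div_iff₀ hg0]
    exact h
  have hup : ∀ᶠ η in 𝓝[>] (0:ℝ),
      focalBayesRisk γ η / (-η * Real.log η / (γ + 1)) ≤ focalB γ η := by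
    filter_upwards [ev1, ev4, ev5] with η h1 h4 h5
    have hg0 : 0 < focalG γ η := focalG_pos γ hγ h1 h5
    have h := focal_bayes_upper γ hγ h1 h5 h4
    have hgeq : -η * Real.log η / (γ + 1) = focalG γ η := rfl
    rw [hgeq, div_le_iff₀ hg0]
    exact h
  exact tendsto_of_tendsto_of_tendsto_of_le_of_le' (focalA_tendsto γ hγ)
    (focalB_tendsto γ hγ) hlow hup
end

section
/- Fix γ > 0 and t > 0 with t ≠ 1. For the focal loss with parameter γ, the f-function f^π(t) = L̄(π) − (πt+1−π)·L̄(πt/(πt+1−π)) satisfies lim_{π→0⁺} f^π(t) / (−(1/(γ+1)) π log(π)(1−t)) = 1; that is, −(1/(γ+1)) π log(π)(1−t) is the f-function of focal loss under ultra-imbalanced classification. -/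
open Filter Topology

/-!
Near `η = 0` the Bayes risk behaves like `η (-log η) / (γ + 1)`. From above, evaluate the risk
at `v = η ^ (1/(γ+1))`. From below, split the predictions at `s = (η (-log η)) ^ (1/(γ+1))`:
predictions `v < s` pay at least `η (-log s) (1-s)^γ ≈ η (-log η) / (γ + 1)`, predictions
`v ≥ s` pay at least `(1-η) v^(γ+1) ≥ (1-η) η (-log η)`.

For the f-function put `q = π t / (π t + 1 - π)`. Then `(π t + 1 - π) q = π t` and
`log q ~ log π`, so the two terms of `f^π(t)` are asymptotic to `π (-log π) / (γ + 1)` and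
`t π (-log π) / (γ + 1)`; since `t ≠ 1` they do not cancel.
-/
open Real (log)

lemma focalPointwiseRisk_eq (γ η v : ℝ) :
    focalPointwiseRisk γ η v = η * -log v * (1 - v) ^ γ + (1 - η) * -log (1 - v) * v ^ γ := by
  unfold focalPointwiseRisk
  ring

section Bounds

variable {γ η : ℝ}

lemma focalPointwiseRisk_nonneg (hη0 : 0 ≤ η) (hη1 : η ≤ 1) {v : ℝ}
    (hv : v ∈ Set.Ioo (0 : ℝ) 1) :
    0 ≤ focalPointwiseRisk γ η v := by
  obtain ⟨hv0, hv1⟩ := hv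
  rw [focalPointwiseRisk_eq]
  have hlog : 0 ≤ -log v := neg_nonneg.2 (Real.log_nonpos hv0.le hv1.le)
  have hlog' : 0 ≤ -log (1 - v) :=
    neg_nonneg.2 (Real.log_nonpos (by linarith) (by linarith))
  exact add_nonneg (mul_nonneg (mul_nonneg hη0 hlog) (Real.rpow_nonneg (by linarith) γ))
    (mul_nonneg (mul_nonneg (by linarith) hlog') (Real.rpow_nonneg hv0.le γ))

lemma focalBayesRisk_le_focalPointwiseRisk (hη0 : 0 ≤ η) (hη1 : η ≤ 1) {v : ℝ}
    (hv : v ∈ Set.Ioo (0 : ℝ) 1) : focalBayesRisk γ η ≤ focalPointwiseRisk γ η v :=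
  csInf_le ⟨0, by rintro _ ⟨u, hu, rfl⟩; exact focalPointwiseRisk_nonneg hη0 hη1 hu⟩ ⟨v, hv, rfl⟩

lemma focalBayesRisk_le (hγ : 0 ≤ γ) (hη : η ∈ Set.Ioo (0 : ℝ) 1) :
    focalBayesRisk γ η ≤ -(1 / (γ + 1)) * η * log η + η / (1 - η ^ (γ + 1)⁻¹) := by
  obtain ⟨hη0, hη1⟩ := hη
  set v := η ^ (γ + 1)⁻¹
  have hv0 : 0 < v := Real.rpow_pos_of_pos hη0 _
  have hv1 : v < 1 := Real.rpow_lt_one hη0.le hη1 (by positivity)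
  have hlog_v : log v = (γ + 1)⁻¹ * log η := Real.log_rpow hη0 _
  have hv_pow : v ^ γ * v = η := by
    rw [← Real.rpow_add_one hv0.ne', Real.rpow_inv_rpow hη0.le (by positivity)]
  have first : η * -log v * (1 - v) ^ γ ≤ -(1 / (γ + 1)) * η * log η := by
    have : (1 - v) ^ γ ≤ 1 := Real.rpow_le_one (by linarith) (by linarith) hγ
    have : 0 ≤ η * -log v := mul_nonneg hη0.le (neg_nonneg.2 (Real.log_nonpos hv0.le hv1.le))
    calc η * -log v * (1 - v) ^ γ ≤ η * -log v := mul_le_of_le_one_right this ‹_›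
      _ = _ := by rw [hlog_v]; ring
  have second : (1 - η) * -log (1 - v) * v ^ γ ≤ η / (1 - v) := by
    have hlog : -log (1 - v) ≤ v / (1 - v) := by
      have := Real.one_sub_inv_le_log_of_pos (sub_pos.2 hv1)
      have : 1 - (1 - v)⁻¹ = -(v / (1 - v)) := by field_simp [(sub_pos.2 hv1).ne']; ring
      linarith
    have hlog0 : 0 ≤ -log (1 - v) :=
      neg_nonneg.2 (Real.log_nonpos (by linarith) (by linarith))
    calc (1 - η) * -log (1 - v) * v ^ γ ≤ 1 * (v / (1 - v)) * v ^ γ := by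
          gcongr
          linarith
      _ = η / (1 - v) := by rw [← hv_pow]; ring
  calc focalBayesRisk γ η ≤ focalPointwiseRisk γ η v :=
        focalBayesRisk_le_focalPointwiseRisk hη0.le hη1.le ⟨hv0, hv1⟩
    _ ≤ _ := by rw [focalPointwiseRisk_eq]; linarith

lemma le_focalBayesRisk (hγ : 0 ≤ γ) (hη0 : 0 ≤ η) (hη1 : η ≤ 1) {s : ℝ}
    (hs : s ∈ Set.Ioo (0 : ℝ) 1) :
    min ((1 - η) * s ^ (γ + 1)) (η * -log s * (1 - s) ^ γ) ≤ focalBayesRisk γ η := by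
  obtain ⟨hs0, hs1⟩ := hs
  refine le_csInf ⟨_, ⟨s, ⟨hs0, hs1⟩, rfl⟩⟩ ?_
  rintro _ ⟨v, ⟨hv0, hv1⟩, rfl⟩
  rw [focalPointwiseRisk_eq]
  have hlog0 : 0 ≤ -log v := neg_nonneg.2 (Real.log_nonpos hv0.le hv1.le)
  have hlog0' : 0 ≤ -log (1 - v) :=
    neg_nonneg.2 (Real.log_nonpos (by linarith) (by linarith))
  have first0 : 0 ≤ η * -log v * (1 - v) ^ γ :=
    mul_nonneg (mul_nonneg hη0 hlog0) (Real.rpow_nonneg (by linarith) γ)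
  have second0 : 0 ≤ (1 - η) * -log (1 - v) * v ^ γ :=
    mul_nonneg (mul_nonneg (by linarith) hlog0') (Real.rpow_nonneg hv0.le γ)
  rcases lt_or_ge v s with hvs | hsv
  · refine (min_le_right _ _).trans ?_
    have : η * -log s * (1 - s) ^ γ ≤ η * -log v * (1 - v) ^ γ := by
      gcongr
    linarith
  · refine (min_le_left _ _).trans ?_
    have hv_le : v ≤ -log (1 - v) := by
      linarith [Real.log_le_sub_one_of_pos (show 0 < 1 - v by linarith)]
    have : (1 - η) * s ^ (γ + 1) ≤ (1 - η) * -log (1 - v) * v ^ γ :=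
      calc (1 - η) * s ^ (γ + 1) ≤ (1 - η) * v ^ (γ + 1) := by
            gcongr
        _ = (1 - η) * v * v ^ γ := by rw [Real.rpow_add_one hv0.ne']; ring
        _ ≤ (1 - η) * -log (1 - v) * v ^ γ := by
            gcongr
    linarith

end Bounds

lemma eventually_mem_Ioo_nhdsGT_zero : ∀ᶠ x in 𝓝[>] (0 : ℝ), x ∈ Set.Ioo (0 : ℝ) 1 :=
  Ioo_mem_nhdsGT one_pos

lemma tendsto_inv_log_nhdsGT_zero : Tendsto (fun x => (log x)⁻¹) (𝓝[>] (0 : ℝ)) (𝓝 0) :=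
  Real.tendsto_log_nhdsGT_zero.inv_tendsto_atBot

lemma tendsto_rpow_zero_of_tendsto_zero {f : ℝ → ℝ} {l : Filter ℝ} (hf : Tendsto f l (𝓝 0)) {p : ℝ}
    (hp : 0 < p) : Tendsto (fun x => f x ^ p) l (𝓝 0) := by
  simpa [Real.zero_rpow hp.ne'] using hf.rpow_const (Or.inr hp.le)

lemma tendsto_log_mul_div_log {w : ℝ → ℝ} (hw : ∀ᶠ x in 𝓝[>] (0 : ℝ), 0 < w x)
    (h : Tendsto (fun x => log (w x) / log x) (𝓝[>] (0 : ℝ)) (𝓝 0)) :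
    Tendsto (fun x => log (x * w x) / log x) (𝓝[>] (0 : ℝ)) (𝓝 1) := by
  have h1 : Tendsto (fun x => 1 + log (w x) / log x) (𝓝[>] (0 : ℝ)) (𝓝 1) := by
    simpa using h.const_add 1
  refine h1.congr' ?_
  filter_upwards [hw, eventually_mem_Ioo_nhdsGT_zero] with x hwx hx
  have hlog : log x ≠ 0 := (Real.log_neg hx.1 hx.2).ne
  rw [Real.log_mul hx.1.ne' hwx.ne', add_div, div_self hlog]

lemma tendsto_log_mul_div_log_of_tendsto {w : ℝ → ℝ} {k : ℝ} (hk : 0 < k)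
    (hw : Tendsto w (𝓝[>] (0 : ℝ)) (𝓝 k)) :
    Tendsto (fun x => log (x * w x) / log x) (𝓝[>] (0 : ℝ)) (𝓝 1) :=
  tendsto_log_mul_div_log (hw.eventually (lt_mem_nhds hk))
    (by simpa [div_eq_mul_inv] using (hw.log hk.ne').mul tendsto_inv_log_nhdsGT_zero)

lemma tendsto_log_mul_neg_log_div_log :
    Tendsto (fun x => log (x * -log x) / log x) (𝓝[>] (0 : ℝ)) (𝓝 1) := by
  have hneg : Tendsto (fun x => -log x) (𝓝[>] (0 : ℝ)) atTop :=
    tendsto_neg_atBot_atTop.comp Real.tendsto_log_nhdsGT_zero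
  refine tendsto_log_mul_div_log (hneg.eventually_gt_atTop 0) ?_
  have := (Real.isLittleO_log_id_atTop.tendsto_div_nhds_zero.comp hneg).neg
  simpa [div_neg] using this

section Asymptotics

variable {γ : ℝ}

lemma neg_one_div_mul_mul_log_pos (hγ : 0 ≤ γ) {η : ℝ} (hη : η ∈ Set.Ioo (0 : ℝ) 1) :
    0 < -(1 / (γ + 1)) * η * log η := by
  rw [show -(1 / (γ + 1)) * η * log η = 1 / (γ + 1) * η * -log η by ring]
  exact mul_pos (mul_pos (by positivity) hη.1) (neg_pos.2 (Real.log_neg hη.1 hη.2))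

lemma focalBayesRisk_div_le (hγ : 0 ≤ γ) {η : ℝ} (hη : η ∈ Set.Ioo (0 : ℝ) 1) :
    focalBayesRisk γ η / (-(1 / (γ + 1)) * η * log η)
      ≤ 1 - (γ + 1) * (log η)⁻¹ / (1 - η ^ (γ + 1)⁻¹) := by
  rw [div_le_iff₀ (neg_one_div_mul_mul_log_pos hγ hη)]
  refine (focalBayesRisk_le hγ hη).trans (le_of_eq ?_)
  have hlog : log η ≠ 0 := (Real.log_neg hη.1 hη.2).ne
  have : 1 - η ^ (γ + 1)⁻¹ ≠ 0 :=
    (sub_pos.2 (Real.rpow_lt_one hη.1.le hη.2 (by positivity))).ne'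
  have : γ + 1 ≠ 0 := by positivity
  field_simp
  ring

lemma le_focalBayesRisk_div (hγ : 0 ≤ γ) {η : ℝ} (hη : η ∈ Set.Ioo (0 : ℝ) 1) :
    min ((1 - η) * (γ + 1))
        ((1 - (η * -log η) ^ (γ + 1)⁻¹) ^ γ * (log (η * -log η) / log η))
      ≤ focalBayesRisk γ η / (-(1 / (γ + 1)) * η * log η) := by
  have hB := neg_one_div_mul_mul_log_pos hγ hη
  rw [le_div_iff₀ hB]
  set τ := η * -log η
  have hτ0 : 0 < τ := mul_pos hη.1 (neg_pos.2 (Real.log_neg hη.1 hη.2))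
  have hτ1 : τ < 1 := by linarith [Real.self_sub_one_le_mul_log hη.1.le, hη.1]
  set s := τ ^ (γ + 1)⁻¹
  have hs0 : 0 < s := Real.rpow_pos_of_pos hτ0 _
  have hs1 : s < 1 := Real.rpow_lt_one hτ0.le hτ1 (by positivity)
  refine le_trans (le_of_eq ?_) (le_focalBayesRisk hγ hη.1.le hη.2.le ⟨hs0, hs1⟩)
  have hγ1 : γ + 1 ≠ 0 := by positivity
  have hlog : log η ≠ 0 := (Real.log_neg hη.1 hη.2).ne
  rw [min_mul_of_nonneg _ _ hB.le, Real.rpow_inv_rpow hτ0.le hγ1, Real.log_rpow hτ0]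
  congr 1
  · field_simp
    ring
  · field_simp

theorem tendsto_focalBayesRisk_div (hγ : 0 ≤ γ) :
    Tendsto (fun η => focalBayesRisk γ η / (-(1 / (γ + 1)) * η * log η))
      (𝓝[>] (0 : ℝ)) (𝓝 1) := by
  have hexp : 0 < (γ + 1)⁻¹ := by positivity
  have hid : Tendsto (fun η : ℝ => η) (𝓝[>] (0 : ℝ)) (𝓝 0) :=
    tendsto_id.mono_left nhdsWithin_le_nhds
  have hτ : Tendsto (fun η => η * -log η) (𝓝[>] (0 : ℝ)) (𝓝 0) := by
    simpa using (Real.continuous_mul_log.tendsto 0).neg.mono_left nhdsWithin_le_nhds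
  have hlo : Tendsto (fun η => min ((1 - η) * (γ + 1))
      ((1 - (η * -log η) ^ (γ + 1)⁻¹) ^ γ * (log (η * -log η) / log η)))
      (𝓝[>] (0 : ℝ)) (𝓝 1) := by
    have h₁ : Tendsto (fun η : ℝ => (1 - η) * (γ + 1)) (𝓝[>] (0 : ℝ)) (𝓝 (γ + 1)) := by
      simpa using (hid.const_sub 1).mul_const (γ + 1)
    have h₂ := (((tendsto_rpow_zero_of_tendsto_zero hτ hexp).const_sub 1).rpow_const
      (Or.inl (by norm_num)) (p := γ)).mul tendsto_log_mul_neg_log_div_log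
    simpa [min_eq_right (show (1 : ℝ) ≤ γ + 1 by linarith)] using h₁.min h₂
  have hhi : Tendsto (fun η => 1 - (γ + 1) * (log η)⁻¹ / (1 - η ^ (γ + 1)⁻¹))
      (𝓝[>] (0 : ℝ)) (𝓝 1) := by
    simpa using ((tendsto_inv_log_nhdsGT_zero.const_mul (γ + 1)).div
      ((tendsto_rpow_zero_of_tendsto_zero hid hexp).const_sub 1) (by norm_num)).const_sub 1
  refine tendsto_of_tendsto_of_tendsto_of_le_of_le' hlo hhi ?_ ?_ <;>
    filter_upwards [eventually_mem_Ioo_nhdsGT_zero] with η hη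
  exacts [le_focalBayesRisk_div hγ hη, focalBayesRisk_div_le hγ hη]

end Asymptotics

theorem tendsto_fFun_div {L : ℝ → ℝ} {c t : ℝ} (hc : c ≠ 0) (ht : 0 < t) (ht1 : t ≠ 1)
    (hL : Tendsto (fun η => L η / (c * η * log η)) (𝓝[>] (0 : ℝ)) (𝓝 1)) :
    Tendsto (fun π => fFun L π t / (c * π * log π * (1 - t))) (𝓝[>] (0 : ℝ)) (𝓝 1) := by
  have hid : Tendsto (fun π : ℝ => π) (𝓝[>] (0 : ℝ)) (𝓝 0) :=
    tendsto_id.mono_left nhdsWithin_le_nhds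
  have hw : Tendsto (fun π => t / (π * t + 1 - π)) (𝓝[>] (0 : ℝ)) (𝓝 t) := by
    simpa [Pi.div_def] using
      tendsto_const_nhds.div (((hid.mul_const t).add_const 1).sub hid) (by norm_num)
  have hq : Tendsto (fun π => π * t / (π * t + 1 - π)) (𝓝[>] (0 : ℝ)) (𝓝[>] 0) := by
    simp_rw [mul_div_assoc]
    refine tendsto_nhdsWithin_iff.2 ⟨by simpa using hid.mul hw, ?_⟩
    filter_upwards [hw.eventually (lt_mem_nhds ht), self_mem_nhdsWithin] with π hwπ hπ
    exact mul_pos hπ hwπ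
  have hlog :
      Tendsto (fun π => log (π * t / (π * t + 1 - π)) / log π) (𝓝[>] (0 : ℝ)) (𝓝 1) := by
    simpa only [mul_div_assoc] using tendsto_log_mul_div_log_of_tendsto ht hw
  have hlim := ((hL.sub ((hL.comp hq).mul hlog |>.const_mul t)).div_const (1 - t))
  rw [mul_one, mul_one, div_self (sub_ne_zero.2 ht1.symm)] at hlim
  refine hlim.congr' ?_
  filter_upwards [eventually_mem_Ioo_nhdsGT_zero, hq.eventually eventually_mem_Ioo_nhdsGT_zero]
    with π hπ hqπ
  have hd : π * t + 1 - π ≠ 0 := by nlinarith [hπ.1, hπ.2]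
  have hlogπ : log π ≠ 0 := (Real.log_neg hπ.1 hπ.2).ne
  have hlogq : log (π * t / (π * t + 1 - π)) ≠ 0 := (Real.log_neg hqπ.1 hqπ.2).ne
  have h1t : 1 - t ≠ 0 := sub_ne_zero.2 ht1.symm
  simp only [Function.comp_apply, fFun]
  field_simp

/-- Fix `γ > 0` and `t > 0` with `t ≠ 1`. For the focal loss with parameter
`γ`, `lim_{π→0⁺} f^π(t) / (-(1/(γ+1)) π log(π) (1-t)) = 1`: the function
`-(1/(γ+1)) π log(π) (1-t)` is the f-function of the focal loss under
ultra-imbalanced classification. -/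
theorem focal_loss_fFun_UIC (γ t : ℝ) (hγ : 0 < γ) (ht : 0 < t) (ht1 : t ≠ 1) :
    Tendsto (fun π : ℝ =>
        fFun (focalBayesRisk γ) π t / (-(1 / (γ + 1)) * π * Real.log π * (1 - t)))
      (𝓝[>] (0 : ℝ)) (𝓝 1) :=
  tendsto_fFun_div (neg_ne_zero.2 (one_div_pos.2 (by linarith)).ne') ht ht1
    (tendsto_focalBayesRisk_div hγ.le)
end

section
/- Fix ε > 0 and t > 0 with t ≠ 1. For the poly loss with parameter ε, the f-function f^π(t) = L̄(π) − (πt+1−π)·L̄(πt/(πt+1−π)) satisfies lim_{π→0⁺} f^π(t) / (−π log(π)(1−t)) = 1; that is, the poly loss has the same f-function under ultra-imbalanced classification as the cross entropy loss, namely −π log(π)(1−t). -/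
open Filter Topology

/-- The pointwise risk of the poly loss with parameter `ε` at class
probability `η` and prediction `v`. -/
noncomputable def polyPointwiseRisk (ε η v : ℝ) : ℝ :=
  -η * Real.log v - (1 - η) * Real.log (1 - v) + ε * (η * (1 - v) + (1 - η) * v)

/-- Pointwise Bayes risk of the poly loss: infimum of the pointwise risk over
predictions in `(0,1)`. -/
noncomputable def polyBayesRisk (ε η : ℝ) : ℝ :=
  sInf (polyPointwiseRisk ε η '' Set.Ioo (0 : ℝ) 1)

noncomputable def LCE (η : ℝ) : ℝ := -η * Real.log η - (1 - η) * Real.log (1 - η)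

lemma risk_ge {ε η : ℝ} (hε : 0 ≤ ε) (hη : η ∈ Set.Ioo (0:ℝ) 1) :
    ∀ v ∈ Set.Ioo (0:ℝ) 1, LCE η ≤ polyPointwiseRisk ε η v := by
  rintro v ⟨hv0, hv1⟩
  obtain ⟨hη0, hη1⟩ := hη
  have h1 : Real.log (v/η) ≤ v/η - 1 := Real.log_le_sub_one_of_pos (by positivity)
  have h2 : Real.log ((1-v)/(1-η)) ≤ (1-v)/(1-η) - 1 :=
    Real.log_le_sub_one_of_pos (div_pos (by linarith) (by linarith))
  rw [Real.log_div (ne_of_gt hv0) (ne_of_gt hη0)] at h1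
  rw [Real.log_div (by linarith) (by linarith)] at h2
  have e1 : η * (Real.log v - Real.log η) ≤ v - η := by
    have h := mul_le_mul_of_nonneg_left h1 hη0.le
    have h' : η * (v/η - 1) = v - η := by
      rw [mul_sub, mul_div_cancel₀ _ (ne_of_gt hη0), mul_one]
    linarith [h' ▸ h]
  have e2 : (1-η) * (Real.log (1-v) - Real.log (1-η)) ≤ η - v := by
    have h := mul_le_mul_of_nonneg_left h2 (by linarith : (0:ℝ) ≤ 1 - η)
    have h' : (1-η) * ((1-v)/(1-η) - 1) = η - v := by
      rw [mul_sub, mul_div_cancel₀ _ (by linarith : (1:ℝ) - η ≠ 0), mul_one]; ring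
    linarith [h' ▸ h]
  have hterm : 0 ≤ ε * (η * (1 - v) + (1 - η) * v) := by
    apply mul_nonneg hε
    have : 0 ≤ η * (1 - v) := mul_nonneg hη0.le (by linarith)
    have : 0 ≤ (1 - η) * v := mul_nonneg (by linarith) hv0.le
    linarith
  unfold LCE polyPointwiseRisk
  nlinarith [e1, e2, hterm]

lemma bayes_bdd {ε η : ℝ} (hε : 0 ≤ ε) (hη : η ∈ Set.Ioo (0:ℝ) 1) :
    LCE η ∈ lowerBounds (polyPointwiseRisk ε η '' Set.Ioo (0 : ℝ) 1) := by
  rintro x ⟨v, hv, rfl⟩; exact risk_ge hε hη v hv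

lemma bayes_ge {ε η : ℝ} (hε : 0 ≤ ε) (hη : η ∈ Set.Ioo (0:ℝ) 1) :
    LCE η ≤ polyBayesRisk ε η :=
  le_csInf ⟨_, ⟨η, hη, rfl⟩⟩ (fun _ hx => bayes_bdd hε hη hx)

lemma bayes_le {ε η : ℝ} (hε : 0 ≤ ε) (hη : η ∈ Set.Ioo (0:ℝ) 1) :
    polyBayesRisk ε η ≤ LCE η + ε * (2 * η) := by
  have h := csInf_le ⟨LCE η, bayes_bdd hε hη⟩ ⟨η, hη, rfl⟩
  have hval : polyPointwiseRisk ε η η = LCE η + ε * (2 * η * (1 - η)) := by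
    unfold polyPointwiseRisk LCE; ring
  rw [hval] at h
  unfold polyBayesRisk
  nlinarith [mul_nonneg hε (sq_nonneg η)]

set_option maxHeartbeats 1000000 in
lemma key_bound (ε t : ℝ) (hε : 0 < ε) (ht : 0 < t) {π : ℝ}
    (hπ0 : 0 < π) (hπh : π < 1/2) :
    |fFun (polyBayesRisk ε) π t - (-π * Real.log π * (1 - t))| ≤
      π * (2*ε*(1+t) + t*|Real.log t| + 2*(1+t)*|t-1|) := by
  obtain ⟨s, hs_def⟩ : ∃ s : ℝ, s = π * t + 1 - π := ⟨_, rfl⟩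
  have hπ1 : π < 1 := by linarith
  have hs : 0 < s := by rw [hs_def]; nlinarith
  obtain ⟨η', hη'_def⟩ : ∃ x : ℝ, x = π * t / s := ⟨_, rfl⟩
  have hη'0 : 0 < η' := by rw [hη'_def]; positivity
  have hη'1 : η' < 1 := by
    rw [hη'_def, div_lt_one hs, hs_def]; nlinarith
  have hsη : s * η' = π * t := by
    rw [hη'_def, mul_div_cancel₀ _ hs.ne']
  have hs1η : s * (1 - η') = 1 - π := by
    rw [mul_sub, hη'_def, mul_div_cancel₀ _ hs.ne', hs_def]; ring
  have hlogη' : Real.log η' = Real.log π + Real.log t - Real.log s := by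
    rw [hη'_def, Real.log_div (by positivity) hs.ne', Real.log_mul hπ0.ne' ht.ne']
  have h1η : (1 : ℝ) - η' = (1-π)/s := by
    rw [eq_div_iff hs.ne']; linarith [hs1η]
  have hlog1η' : Real.log (1 - η') = Real.log (1-π) - Real.log s := by
    rw [h1η, Real.log_div (by linarith) hs.ne']
  have hsL : s * LCE η' = -(π*t) * (Real.log π + Real.log t - Real.log s)
      - (1-π) * (Real.log (1-π) - Real.log s) := by
    calc s * LCE η' = -(s*η') * Real.log η' - (s*(1-η')) * Real.log (1-η') := by
          unfold LCE; ring
      _ = _ := by rw [hsη, hs1η, hlogη', hlog1η']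
  have hid : LCE π - s * LCE η' =
      -π * Real.log π * (1-t) + π*t*Real.log t - s * Real.log s := by
    have hLπ : LCE π = -π * Real.log π - (1-π) * Real.log (1-π) := rfl
    linear_combination hLπ - hsL + Real.log s * hs_def
  have hb1 : |polyBayesRisk ε π - LCE π| ≤ 2*ε*π := by
    rw [abs_le]
    constructor
    · nlinarith [bayes_ge hε.le ⟨hπ0, hπ1⟩, mul_pos hε hπ0]
    · nlinarith [bayes_le hε.le ⟨hπ0, hπ1⟩]
  have hb2 : |polyBayesRisk ε η' - LCE η'| ≤ 2*ε*η' := by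
    rw [abs_le]
    constructor
    · nlinarith [bayes_ge hε.le ⟨hη'0, hη'1⟩, mul_pos hε hη'0]
    · nlinarith [bayes_le hε.le ⟨hη'0, hη'1⟩]
  have hs_half : (1:ℝ)/2 ≤ s := by rw [hs_def]; nlinarith
  have hs_ub : s ≤ 1 + t := by rw [hs_def]; nlinarith
  have hlogs : |Real.log s| ≤ 2 * |s - 1| := by
    rcases le_or_gt 1 s with h | h
    · rw [abs_of_nonneg (Real.log_nonneg h), abs_of_nonneg (by linarith)]
      linarith [Real.log_le_sub_one_of_pos hs]
    · rw [abs_of_nonpos (Real.log_nonpos (by linarith) h.le),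
        abs_of_neg (by linarith : s - 1 < 0)]
      have h2 : Real.log (1/s) ≤ 1/s - 1 := Real.log_le_sub_one_of_pos (by positivity)
      rw [Real.log_div one_ne_zero hs.ne', Real.log_one] at h2
      have heq : 1/s - 1 = (1-s)/s := by field_simp
      have h3 : (1-s)/s ≤ 2*(1-s) := by
        rw [div_le_iff₀ hs]; nlinarith
      linarith
  have hs1 : |s - 1| = π * |t - 1| := by
    rw [show s - 1 = π * (t-1) by rw [hs_def]; ring, abs_mul, abs_of_pos hπ0]
  have hdiff : fFun (polyBayesRisk ε) π t - (-π * Real.log π * (1 - t)) =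
      (polyBayesRisk ε π - LCE π) - s * (polyBayesRisk ε η' - LCE η')
        + (π*t*Real.log t - s * Real.log s) := by
    unfold fFun
    rw [← hs_def, ← hη'_def]
    linarith [hid]
  rw [hdiff]
  have habs1 : |(polyBayesRisk ε π - LCE π) - s * (polyBayesRisk ε η' - LCE η')
      + (π*t*Real.log t - s * Real.log s)| ≤
      |polyBayesRisk ε π - LCE π| + s * |polyBayesRisk ε η' - LCE η'|
      + π*t*|Real.log t| + s * |Real.log s| := by
    have a1 := abs_add_le ((polyBayesRisk ε π - LCE π) - s * (polyBayesRisk ε η' - LCE η'))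
      (π*t*Real.log t - s * Real.log s)
    have a2 := abs_sub (polyBayesRisk ε π - LCE π) (s * (polyBayesRisk ε η' - LCE η'))
    rw [abs_mul, abs_of_pos hs] at a2
    have a3 : |π*t*Real.log t - s * Real.log s| ≤ π*t*|Real.log t| + s*|Real.log s| := by
      calc |π*t*Real.log t - s * Real.log s| ≤ |π*t*Real.log t| + |s * Real.log s| :=
            abs_sub _ _
        _ = π*t*|Real.log t| + s*|Real.log s| := by
            rw [abs_mul, abs_mul, abs_mul, abs_of_pos hs, abs_of_pos hπ0, abs_of_pos ht]
    linarith
  have hsb2 : s * |polyBayesRisk ε η' - LCE η'| ≤ 2*ε*(π*t) := by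
    calc s * |polyBayesRisk ε η' - LCE η'| ≤ s * (2*ε*η') :=
          mul_le_mul_of_nonneg_left hb2 hs.le
      _ = 2*ε*(s*η') := by ring
      _ = 2*ε*(π*t) := by rw [hsη]
  have hslogs : s * |Real.log s| ≤ 2*(1+t)*(π*|t-1|) := by
    calc s * |Real.log s| ≤ s * (2*|s-1|) := mul_le_mul_of_nonneg_left hlogs hs.le
      _ = 2*s*|s-1| := by ring
      _ ≤ 2*(1+t)*|s-1| := by
          have h0 : (0:ℝ) ≤ |s-1| := abs_nonneg _
          nlinarith
      _ = 2*(1+t)*(π*|t-1|) := by rw [hs1]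
  calc _ ≤ |polyBayesRisk ε π - LCE π| + s * |polyBayesRisk ε η' - LCE η'|
      + π*t*|Real.log t| + s * |Real.log s| := habs1
    _ ≤ 2*ε*π + 2*ε*(π*t) + π*t*|Real.log t| + 2*(1+t)*(π*|t-1|) := by
        linarith [hb1, hsb2, hslogs]
    _ = π * (2*ε*(1+t) + t*|Real.log t| + 2*(1+t)*|t-1|) := by ring

/-- Fix `ε > 0` and `t > 0` with `t ≠ 1`. For the poly loss with parameter
`ε`, `lim_{π→0⁺} f^π(t) / (-π log(π) (1-t)) = 1`: under ultra-imbalanced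
classification the poly loss has the same f-function `-π log(π) (1-t)` as the
cross entropy loss. -/
theorem poly_loss_fFun_UIC (ε t : ℝ) (hε : 0 < ε) (ht : 0 < t) (ht1 : t ≠ 1) :
    Tendsto (fun π : ℝ =>
        fFun (polyBayesRisk ε) π t / (-π * Real.log π * (1 - t)))
      (𝓝[>] (0 : ℝ)) (𝓝 1) := by
  obtain ⟨C, hC⟩ : ∃ C : ℝ, C = 2*ε*(1+t) + t*|Real.log t| + 2*(1+t)*|t-1| := ⟨_, rfl⟩
  have ht1' : (0:ℝ) < |1 - t| := abs_pos.2 (by intro h; apply ht1; linarith)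
  have hGlim : Tendsto (fun π : ℝ => C * ((-Real.log π) * |1 - t|)⁻¹)
      (𝓝[>] (0:ℝ)) (𝓝 0) := by
    have h1 : Tendsto (fun π : ℝ => -Real.log π) (𝓝[>] (0:ℝ)) atTop :=
      tendsto_neg_atBot_atTop.comp Real.tendsto_log_nhdsGT_zero
    have h2 : Tendsto (fun π : ℝ => (-Real.log π) * |1 - t|) (𝓝[>] (0:ℝ)) atTop :=
      h1.atTop_mul_const ht1'
    have h3 : Tendsto (fun π : ℝ => ((-Real.log π) * |1 - t|)⁻¹) (𝓝[>] (0:ℝ)) (𝓝 0) :=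
      tendsto_inv_atTop_zero.comp h2
    have h4 := h3.const_mul C
    rw [mul_zero] at h4
    exact h4
  have hbound : ∀ᶠ π in 𝓝[>] (0:ℝ),
      |fFun (polyBayesRisk ε) π t / (-π * Real.log π * (1 - t)) - 1| ≤
        C * ((-Real.log π) * |1 - t|)⁻¹ := by
    filter_upwards [Ioo_mem_nhdsGT_of_mem
      (by constructor <;> norm_num : (0:ℝ) ∈ Set.Ico (0:ℝ) (1/2))] with π hπ
    obtain ⟨hπ0, hπh⟩ := hπ
    have hlogneg : Real.log π < 0 := Real.log_neg hπ0 (by linarith)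
    have hDabs : |(-π * Real.log π * (1 - t))| = π * ((-Real.log π) * |1 - t|) := by
      rw [show -π * Real.log π * (1-t) = (π * (-Real.log π)) * (1-t) by ring,
        abs_mul, abs_of_pos (by nlinarith : (0:ℝ) < π * (-Real.log π))]
      ring
    have hDpos : (0:ℝ) < |(-π * Real.log π * (1 - t))| := by
      rw [hDabs]
      exact mul_pos hπ0 (mul_pos (by linarith) ht1')
    have hD0 : (-π * Real.log π * (1 - t)) ≠ 0 := by
      intro h
      rw [← abs_eq_zero] at h
      linarith
    rw [div_sub_one hD0, abs_div]
    have hkey := key_bound ε t hε ht hπ0 hπh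
    rw [← hC] at hkey
    calc |fFun (polyBayesRisk ε) π t - (-π * Real.log π * (1 - t))|
          / |(-π * Real.log π * (1 - t))|
        ≤ (π * C) / |(-π * Real.log π * (1 - t))| := by gcongr
      _ = C * ((-Real.log π) * |1 - t|)⁻¹ := by
          rw [hDabs, show π * C = π * C from rfl,
            mul_div_mul_left C ((-Real.log π) * |1 - t|) hπ0.ne', div_eq_mul_inv]
  have h0 : Tendsto (fun π : ℝ =>
      fFun (polyBayesRisk ε) π t / (-π * Real.log π * (1 - t)) - 1)
      (𝓝[>] (0:ℝ)) (𝓝 0) := by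
    apply squeeze_zero_norm' _ hGlim
    simpa [Real.norm_eq_abs] using hbound
  have h1 := h0.add (tendsto_const_nhds (x := (1:ℝ)))
  rw [zero_add] at h1
  simpa using h1
end

section
/- Fix δ₁ ∈ (0,1). The pointwise Bayes risk of the vector scaling loss, L̄(η) = inf_{η̂∈(0,1)} [η log(1 + ((1−η̂)/η̂)^{δ₁}) − (1−η) log(1−η̂)], satisfies lim_{η→0⁺} L̄(η) / (−δ₁ η log η) = 1. -/
/-!
The Bayes risk lies between two bounds of the form `-δ η log η + O(η)`. Predicting `v = η`
gives the upper bound, since `((1 - η) / η)^δ ≤ η^(-δ)`. For the lower bound, `log (1 + t^δ) ≥ δ log t` and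
`-log (1 - v) ≥ v` reduce the risk, for `η ≤ 1/4`, to at least `v / 2 - δ η log v`, whose minimum
over `v > 0` is `δ η - δ η log (2 δ η)`. Hence `L̄(η) = -δ η log η + O(η)`, and `η = o(η log η)`
as `η → 0⁺`.
-/

open Filter Topology

/-- The pointwise risk of the vector scaling (VS) loss with multiplicative
parameter `δ` at class probability `η` and prediction `v`:
`η log(1 + ((1-v)/v)^δ) - (1-η) log(1-v)`. -/
noncomputable def vsPointwiseRisk (δ η v : ℝ) : ℝ :=
  η * Real.log (1 + ((1 - v) / v) ^ δ) - (1 - η) * Real.log (1 - v)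

/-- Pointwise Bayes risk of the VS loss: infimum of the pointwise risk over
predictions in `(0,1)`. -/
noncomputable def vsBayesRisk (δ η : ℝ) : ℝ :=
  sInf (vsPointwiseRisk δ η '' Set.Ioo (0 : ℝ) 1)

open Real Set Asymptotics

-- The right-hand side is minimal at `x = a / b`.
lemma sub_mul_log_div_le_mul_sub_mul_log {a b x : ℝ} (ha : 0 < a) (hb : 0 < b) (hx : 0 < x) :
    a - a * log (a / b) ≤ b * x - a * log x := by
  have hlog : log (b * x / a) = log x - log (a / b) := by
    rw [← log_div hx.ne' (div_pos ha hb).ne']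
    congr 1
    field_simp
  have key := mul_le_mul_of_nonneg_left (log_le_sub_one_of_pos (by positivity : 0 < b * x / a))
    ha.le
  rw [hlog, mul_sub_one, mul_div_cancel₀ _ ha.ne'] at key
  linarith

lemma neg_mul_log_sub_mul_log_one_sub_le_vsPointwiseRisk {δ η v : ℝ} (hη : 0 ≤ η)
    (hv : v ∈ Ioo (0 : ℝ) 1) :
    -(η * δ) * log v - (1 - η * (1 + δ)) * log (1 - v) ≤ vsPointwiseRisk δ η v := by
  obtain ⟨hv0, hv1⟩ := hv
  have hq : 0 < (1 - v) / v := div_pos (by linarith) hv0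
  have hlog : δ * (log (1 - v) - log v) ≤ log (1 + ((1 - v) / v) ^ δ) := by
    rw [← log_div (by linarith) hv0.ne', ← log_rpow hq]
    exact log_le_log (rpow_pos_of_pos hq δ) (by linarith)
  have := mul_le_mul_of_nonneg_left hlog hη
  unfold vsPointwiseRisk
  linarith

lemma le_vsPointwiseRisk {δ η v : ℝ} (hδ0 : 0 < δ) (hδ1 : δ ≤ 1)
    (hη : η ∈ Ioc (0 : ℝ) (1 / 4)) (hv : v ∈ Ioo (0 : ℝ) 1) :
    -δ * η * log η + δ * η * (1 - log 2 - log δ) ≤ vsPointwiseRisk δ η v := by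
  obtain ⟨hη0, hη4⟩ := hη
  have hrisk := neg_mul_log_sub_mul_log_one_sub_le_vsPointwiseRisk (δ := δ) hη0.le hv
  have hlog1 : v ≤ -log (1 - v) := by
    linarith [log_le_sub_one_of_pos (by linarith [hv.2] : 0 < 1 - v)]
  have hcoef : 1 / 2 * v ≤ (1 - η * (1 + δ)) * -log (1 - v) :=
    mul_le_mul (by nlinarith) hlog1 hv.1.le (by nlinarith)
  have hmin := sub_mul_log_div_le_mul_sub_mul_log (mul_pos hη0 hδ0) (by norm_num : (0 : ℝ) < 1 / 2)
    hv.1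
  have hlog2 : log (η * δ / (1 / 2)) = log 2 + log η + log δ := by
    rw [show η * δ / (1 / 2) = 2 * η * δ by ring, log_mul (by positivity) hδ0.ne',
      log_mul (by norm_num) hη0.ne']
  rw [hlog2] at hmin
  linarith

lemma vsPointwiseRisk_self_le {δ η : ℝ} (hδ : 0 ≤ δ) (hη : η ∈ Ioo (0 : ℝ) 1) :
    vsPointwiseRisk δ η η ≤ -δ * η * log η + η * (log 2 + 1) := by
  obtain ⟨hη0, hη1⟩ := hη
  have hinv : 1 ≤ η⁻¹ := one_le_inv₀ hη0 |>.mpr hη1.le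
  have hpow : ((1 - η) / η) ^ δ ≤ η⁻¹ ^ δ :=
    rpow_le_rpow (div_pos (by linarith) hη0).le (by rw [div_eq_mul_inv]; nlinarith) hδ
  have hfirst : log (1 + ((1 - η) / η) ^ δ) ≤ log 2 - δ * log η := by
    have hone : 1 ≤ η⁻¹ ^ δ := one_le_rpow hinv hδ
    calc log (1 + ((1 - η) / η) ^ δ) ≤ log (2 * η⁻¹ ^ δ) :=
          log_le_log (by positivity) (by linarith)
      _ = log 2 - δ * log η := by
          rw [log_mul two_ne_zero (by positivity), log_rpow (by positivity), log_inv]; ring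
  have hsecond : -η ≤ (1 - η) * log (1 - η) := by
    have h := mul_le_mul_of_nonneg_left (one_sub_inv_le_log_of_pos (by linarith : 0 < 1 - η))
      (by linarith : 0 ≤ 1 - η)
    rwa [mul_one_sub, mul_inv_cancel₀ (by linarith), sub_sub_cancel_left] at h
  have := mul_le_mul_of_nonneg_left hfirst hη0.le
  unfold vsPointwiseRisk
  linarith

lemma le_vsBayesRisk {δ η : ℝ} (hδ0 : 0 < δ) (hδ1 : δ ≤ 1) (hη : η ∈ Ioc (0 : ℝ) (1 / 4)) :
    -δ * η * log η + δ * η * (1 - log 2 - log δ) ≤ vsBayesRisk δ η :=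
  le_csInf ((nonempty_Ioo.mpr zero_lt_one).image _)
    (forall_mem_image.mpr fun _ hv ↦ le_vsPointwiseRisk hδ0 hδ1 hη hv)

lemma vsBayesRisk_le {δ η : ℝ} (hδ0 : 0 < δ) (hδ1 : δ ≤ 1) (hη : η ∈ Ioc (0 : ℝ) (1 / 4)) :
    vsBayesRisk δ η ≤ -δ * η * log η + η * (log 2 + 1) :=
  (csInf_le ⟨_, forall_mem_image.mpr fun _ hv ↦ le_vsPointwiseRisk hδ0 hδ1 hη hv⟩
    (mem_image_of_mem _ ⟨hη.1, by linarith [hη.2]⟩)).trans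
    (vsPointwiseRisk_self_le hδ0.le ⟨hη.1, by linarith [hη.2]⟩)

lemma isBigO_vsBayesRisk_sub {δ : ℝ} (hδ0 : 0 < δ) (hδ1 : δ ≤ 1) :
    (fun η ↦ vsBayesRisk δ η - -δ * η * log η) =O[𝓝[>] 0] fun η ↦ η := by
  refine IsBigO.of_bound (|δ * (1 - log 2 - log δ)| + (log 2 + 1)) ?_
  filter_upwards [Ioc_mem_nhdsGT (by norm_num : (0 : ℝ) < 1 / 4)] with η hη
  have hlower := le_vsBayesRisk hδ0 hδ1 hη
  have hupper := vsBayesRisk_le hδ0 hδ1 hη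
  have habs := mul_le_mul_of_nonneg_right (neg_abs_le (δ * (1 - log 2 - log δ))) hη.1.le
  have habs_nonneg := mul_nonneg (abs_nonneg (δ * (1 - log 2 - log δ))) hη.1.le
  have hlog2_nonneg : 0 ≤ (log 2 + 1) * η := mul_nonneg (by positivity) hη.1.le
  rw [norm_eq_abs, norm_eq_abs, abs_of_pos hη.1, abs_sub_le_iff]
  constructor <;> linarith

lemma isLittleO_self_mul_log_nhdsGT :
    (fun x : ℝ ↦ x) =o[𝓝[>] 0] fun x ↦ x * log x := by
  have hlog : (fun _ : ℝ ↦ (1 : ℝ)) =o[𝓝[>] 0] log :=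
    (isLittleO_one_left_iff ℝ).mpr (tendsto_abs_atBot_atTop.comp tendsto_log_nhdsGT_zero)
  simpa using (isBigO_refl (fun x : ℝ ↦ x) _).mul_isLittleO hlog

/-- Fix `δ₁ ∈ (0,1)`. The pointwise Bayes risk of the vector scaling loss
satisfies `lim_{η→0⁺} L̄(η) / (-δ₁ η log η) = 1`. -/
theorem vs_loss_bayes_risk_asymptotics (δ₁ : ℝ) (hδ : δ₁ ∈ Set.Ioo (0 : ℝ) 1) :
    Tendsto (fun η : ℝ => vsBayesRisk δ₁ η / (-δ₁ * η * Real.log η))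
      (𝓝[>] (0 : ℝ)) (𝓝 1) := by
  obtain ⟨hδ0, hδ1⟩ := hδ
  have hlittle : (fun η ↦ η) =o[𝓝[>] 0] fun η ↦ -δ₁ * η * log η := by
    simpa only [mul_assoc] using isLittleO_self_mul_log_nhdsGT.const_mul_right' (c := -δ₁)
      (isUnit_iff_ne_zero.mpr (neg_ne_zero.mpr hδ0.ne'))
  have hequiv : (vsBayesRisk δ₁ ·) ~[𝓝[>] 0] fun η ↦ -δ₁ * η * log η :=
    (isBigO_vsBayesRisk_sub hδ0 hδ1.le).trans_isLittleO hlittle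
  have hne : ∀ᶠ η in 𝓝[>] (0 : ℝ), -δ₁ * η * log η ≠ 0 := by
    filter_upwards [Ioo_mem_nhdsGT zero_lt_one] with η hη
    exact mul_ne_zero (mul_ne_zero (neg_ne_zero.mpr hδ0.ne') hη.1.ne') (log_neg hη.1 hη.2).ne
  exact (isEquivalent_iff_tendsto_one hne).mp hequiv
end

section
/- Fix δ₁ ∈ (0,1) and t > 0 with t ≠ 1. For the vector scaling loss with parameter δ₁, the f-function f^π(t) = L̄(π) − (πt+1−π)·L̄(πt/(πt+1−π)) satisfies lim_{π→0⁺} f^π(t) / (−δ₁ π log(π)(1−t)) = 1; that is, −δ₁ π log(π)(1−t) is the f-function of the VS loss under ultra-imbalanced classification. -/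
open Filter Topology

lemma linear_log_lower (a b v : ℝ) (ha : 0 < a) (hb : 0 < b) (hv : 0 < v) :
    b + b * Real.log (a / b) ≤ a * v - b * Real.log v := by
  have h1 : Real.log (v * (a / b)) ≤ v * (a / b) - 1 :=
    Real.log_le_sub_one_of_pos (by positivity)
  have h2 : Real.log (v * (a / b)) = Real.log v + Real.log (a / b) :=
    Real.log_mul (ne_of_gt hv) (by positivity)
  rw [h2] at h1
  have hab : v * (a / b) * b = a * v := by field_simp
  nlinarith [mul_le_mul_of_nonneg_right h1 hb.le]


lemma vs_lower (δ η v : ℝ) (hδ : δ ∈ Set.Ioc (0:ℝ) 1) (hη : η ∈ Set.Ioc (0:ℝ) (1/4))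
    (hv : v ∈ Set.Ioo (0:ℝ) 1) :
    -δ * η * Real.log η - η ≤ vsPointwiseRisk δ η v := by
  obtain ⟨hδ0, hδ1⟩ := hδ
  obtain ⟨hη0, hη4⟩ := hη
  obtain ⟨hv0, hv1⟩ := hv
  have h1v : (0:ℝ) < 1 - v := by linarith
  have hu : 0 < (1 - v) / v := by positivity
  have hupos : 0 < ((1 - v) / v) ^ δ := Real.rpow_pos_of_pos hu δ
  -- log(1+u^δ) ≥ δ log u
  have hlog1 : δ * Real.log ((1 - v) / v) ≤ Real.log (1 + ((1 - v) / v) ^ δ) := by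
    rw [← Real.log_rpow hu]
    gcongr
    linarith
  have hlogdiv : Real.log ((1 - v) / v) = Real.log (1 - v) - Real.log v :=
    Real.log_div (ne_of_gt h1v) (ne_of_gt hv0)
  have hL1 : Real.log (1 - v) ≤ -v := by
    have := Real.log_le_sub_one_of_pos h1v; linarith
  -- risk ≥ ηδ(L1 - Lv) - (1-η)L1 = (1-η-ηδ)(-L1) - ηδ Lv ≥ (1-η-ηδ)v - ηδ Lv
  have ha : (0:ℝ) < 1 - η - η * δ := by nlinarith
  have hb : 0 < η * δ := by positivity
  have key := linear_log_lower (1 - η - η * δ) (η * δ) v ha hb hv0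
  have hlogq : Real.log ((1 - η - η * δ) / (η * δ)) =
      Real.log (1 - η - η * δ) - Real.log η - Real.log δ := by
    rw [Real.log_div (ne_of_gt ha) (ne_of_gt hb), Real.log_mul (ne_of_gt hη0) (ne_of_gt hδ0)]
    ring
  -- log a ≥ -1 since a ≥ 1/2
  have hloga : -1 ≤ Real.log (1 - η - η * δ) := by
    rw [Real.le_log_iff_exp_le ha]
    have h1 : Real.exp (-1) ≤ 1/2 := by
      rw [Real.exp_neg]
      have h2 : (2:ℝ) ≤ Real.exp 1 := by nlinarith [Real.add_one_le_exp (1:ℝ)]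
      have hinv : (Real.exp 1)⁻¹ * Real.exp 1 = 1 := inv_mul_cancel₀ (ne_of_gt (Real.exp_pos 1))
      nlinarith [inv_pos.mpr (Real.exp_pos 1)]
    nlinarith
  have hlogδ : Real.log δ ≤ 0 := Real.log_nonpos hδ0.le hδ1
  -- chain
  have step1 : η * (δ * Real.log ((1 - v) / v)) - (1 - η) * Real.log (1 - v)
      ≤ vsPointwiseRisk δ η v := by
    unfold vsPointwiseRisk
    nlinarith [hlog1]
  have step2 : (1 - η - η * δ) * v - (η * δ) * Real.log v ≤
      η * (δ * Real.log ((1 - v) / v)) - (1 - η) * Real.log (1 - v) := by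
    rw [hlogdiv]
    nlinarith [hL1]
  have step3 : -δ * η * Real.log η - η ≤
      η * δ + η * δ * Real.log ((1 - η - η * δ) / (η * δ)) := by
    rw [hlogq]
    nlinarith [mul_le_mul_of_nonneg_left hloga (le_of_lt hb),
      mul_nonpos_of_nonneg_of_nonpos hb.le hlogδ]
  linarith [key, step1, step2, step3]


lemma vs_upper (δ η : ℝ) (hδ : δ ∈ Set.Ioc (0:ℝ) 1) (hη : η ∈ Set.Ioc (0:ℝ) (1/4)) :
    vsPointwiseRisk δ η η ≤ -δ * η * Real.log η + 3 * η := by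
  obtain ⟨hδ0, hδ1⟩ := hδ
  obtain ⟨hη0, hη4⟩ := hη
  have h1η : (0:ℝ) < 1 - η := by linarith
  have hu : 0 < (1 - η) / η := by positivity
  have hu1 : (1:ℝ) ≤ (1 - η) / η := by
    rw [le_div_iff₀ hη0]; linarith
  have hupos : 0 < ((1 - η) / η) ^ δ := Real.rpow_pos_of_pos hu δ
  have hu1δ : (1:ℝ) ≤ ((1 - η) / η) ^ δ := Real.one_le_rpow hu1 hδ0.le
  -- log(1+u^δ) ≤ log 2 + δ log u
  have h2 : Real.log (1 + ((1 - η) / η) ^ δ) ≤ Real.log 2 + δ * Real.log ((1 - η) / η) := by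
    have : Real.log (1 + ((1 - η) / η) ^ δ) ≤ Real.log (2 * ((1 - η) / η) ^ δ) := by
      gcongr
      linarith
    rwa [Real.log_mul (by norm_num) (ne_of_gt hupos), Real.log_rpow hu] at this
  have hlogdiv : Real.log ((1 - η) / η) = Real.log (1 - η) - Real.log η :=
    Real.log_div (ne_of_gt h1η) (ne_of_gt hη0)
  have hlog1η : Real.log (1 - η) ≤ 0 := Real.log_nonpos h1η.le (by linarith)
  have hlogu : Real.log ((1 - η) / η) ≤ -Real.log η := by rw [hlogdiv]; linarith
  have hlogu0 : 0 ≤ Real.log ((1 - η) / η) := Real.log_nonneg hu1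
  have hlog2 : Real.log 2 ≤ 1 := by
    have := Real.log_le_sub_one_of_pos (show (0:ℝ) < 2 by norm_num); linarith
  -- -log(1-η) ≤ 2η
  have hL1 : -2 * η ≤ Real.log (1 - η) := by
    rw [Real.le_log_iff_exp_le h1η]
    have h3 : Real.exp (2*η) * Real.exp (-2*η) = 1 := by
      rw [← Real.exp_add]; norm_num
    have h4 : 2*η + 1 ≤ Real.exp (2*η) := by
      have := Real.add_one_le_exp (2*η); linarith
    nlinarith [Real.exp_pos (-2*η), Real.exp_pos (2*η)]
  unfold vsPointwiseRisk
  have hterm1 : η * Real.log (1 + ((1 - η) / η) ^ δ) ≤ η * 1 + δ * η * (-Real.log η) := by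
    have : Real.log (1 + ((1 - η) / η) ^ δ) ≤ 1 + δ * (-Real.log η) := by
      have : δ * Real.log ((1 - η) / η) ≤ δ * (-Real.log η) :=
        mul_le_mul_of_nonneg_left hlogu hδ0.le
      linarith
    nlinarith
  have hterm2 : -(1 - η) * Real.log (1 - η) ≤ 2 * η := by
    nlinarith
  nlinarith


lemma vs_bayes_est (δ η : ℝ) (hδ : δ ∈ Set.Ioc (0:ℝ) 1) (hη : η ∈ Set.Ioc (0:ℝ) (1/4)) :
    |vsBayesRisk δ η + δ * η * Real.log η| ≤ 3 * η := by
  have hη0 := hη.1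
  have hηmem : η ∈ Set.Ioo (0:ℝ) 1 := ⟨hη0, by linarith [hη.2]⟩
  have hlow : ∀ x ∈ vsPointwiseRisk δ η '' Set.Ioo (0:ℝ) 1,
      -δ * η * Real.log η - η ≤ x := by
    rintro x ⟨v, hv, rfl⟩
    exact vs_lower δ η v hδ hη hv
  have hbdd : BddBelow (vsPointwiseRisk δ η '' Set.Ioo (0:ℝ) 1) :=
    ⟨-δ * η * Real.log η - η, hlow⟩
  have hne : (vsPointwiseRisk δ η '' Set.Ioo (0:ℝ) 1).Nonempty :=
    ⟨_, Set.mem_image_of_mem _ hηmem⟩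
  have h1 : -δ * η * Real.log η - η ≤ vsBayesRisk δ η := le_csInf hne hlow
  have h2 : vsBayesRisk δ η ≤ -δ * η * Real.log η + 3 * η :=
    le_trans (csInf_le hbdd (Set.mem_image_of_mem _ hηmem)) (vs_upper δ η hδ hη)
  rw [abs_le]
  constructor <;> linarith


lemma exp_neg_one_le : Real.exp (-1) ≤ 1/2 := by
  rw [Real.exp_neg]
  have h2 : (2:ℝ) ≤ Real.exp 1 := by nlinarith [Real.add_one_le_exp (1:ℝ)]
  have hinv : (Real.exp 1)⁻¹ * Real.exp 1 = 1 := inv_mul_cancel₀ (ne_of_gt (Real.exp_pos 1))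
  nlinarith [inv_pos.mpr (Real.exp_pos 1)]


set_option maxHeartbeats 1000000 in
/-- Fix `δ₁ ∈ (0,1)` and `t > 0` with `t ≠ 1`. For the VS loss with parameter
`δ₁`, `lim_{π→0⁺} f^π(t) / (-δ₁ π log(π) (1-t)) = 1`: the function
`-δ₁ π log(π) (1-t)` is the f-function of the VS loss under ultra-imbalanced
classification. -/
theorem vs_loss_fFun_UIC (δ₁ t : ℝ) (hδ : δ₁ ∈ Set.Ioo (0 : ℝ) 1)
    (ht : 0 < t) (ht1 : t ≠ 1) :
    Tendsto (fun π : ℝ =>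
        fFun (vsBayesRisk δ₁) π t / (-δ₁ * π * Real.log π * (1 - t)))
      (𝓝[>] (0 : ℝ)) (𝓝 1) := by
  obtain ⟨hδ0, hδ1⟩ := hδ
  have hδIoc : δ₁ ∈ Set.Ioc (0:ℝ) 1 := ⟨hδ0, hδ1.le⟩
  have ht1' : (1:ℝ) - t ≠ 0 := sub_ne_zero.mpr (fun h => ht1 h.symm)
  have habs1t : 0 < |1 - t| := abs_pos.mpr ht1'
  set C₀ : ℝ := 3 + 3*t + t*(|Real.log t| + 1) with hC₀def
  have hC₀pos : 0 < C₀ := by positivity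
  set ε : ℝ := min (1/4) (min (1/(2*(|t-1|+1))) (1/(8*(t+1)))) with hεdef
  have hεpos : 0 < ε := by positivity
  -- the key pointwise estimate
  have key : ∀ π ∈ Set.Ioo (0:ℝ) ε,
      |fFun (vsBayesRisk δ₁) π t / (-δ₁*π*Real.log π*(1-t)) - 1|
        ≤ (C₀/(δ₁*|1-t|)) * (-Real.log π)⁻¹ := by
    rintro π ⟨hπ0, hπε⟩
    have hπ14 : π ≤ 1/4 := le_of_lt (lt_of_lt_of_le hπε (min_le_left _ _))
    have hπ1 : π < 1 := by linarith
    have hπA : π < 1/(2*(|t-1|+1)) :=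
      lt_of_lt_of_le hπε (le_trans (min_le_right _ _) (min_le_left _ _))
    have hπB : π < 1/(8*(t+1)) :=
      lt_of_lt_of_le hπε (le_trans (min_le_right _ _) (min_le_right _ _))
    have habsT : 0 ≤ |t-1| := abs_nonneg _
    have hπT : π * (|t-1|+1) ≤ 1/2 := by
      rw [lt_div_iff₀ (by positivity)] at hπA; nlinarith
    have hπt : π * t ≤ 1/8 := by
      rw [lt_div_iff₀ (by positivity)] at hπB; nlinarith
    set s : ℝ := π * t + 1 - π with hsdef
    have hs_lb : 1/2 ≤ s := by
      have h1 : -(|t-1|) ≤ t - 1 := neg_abs_le _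
      have : π * (t-1) ≥ π * (-(|t-1|)) := mul_le_mul_of_nonneg_left h1 hπ0.le
      have h2 : π * |t-1| ≤ 1/2 := by nlinarith
      nlinarith
    have hs_ub : s ≤ 2 := by
      have h1 : t - 1 ≤ |t-1| := le_abs_self _
      have h2 : π * |t-1| ≤ 1/2 := by nlinarith
      nlinarith [mul_le_mul_of_nonneg_left h1 hπ0.le]
    have hs0 : 0 < s := by linarith
    set η' : ℝ := π * t / s with hη'def
    have hη'0 : 0 < η' := by positivity
    have hη'4 : η' ≤ 1/4 := by
      rw [hη'def, div_le_iff₀ hs0]; nlinarith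
    have e₁ := vs_bayes_est δ₁ π hδIoc ⟨hπ0, hπ14⟩
    have e₂ := vs_bayes_est δ₁ η' hδIoc ⟨hη'0, hη'4⟩
    have hlogπ_neg : Real.log π < 0 := Real.log_neg hπ0 hπ1
    have hlogη' : Real.log η' = Real.log π + Real.log t - Real.log s := by
      rw [hη'def, Real.log_div (by positivity) (ne_of_gt hs0),
        Real.log_mul (ne_of_gt hπ0) (ne_of_gt ht)]
    have hlogs_abs : |Real.log s| ≤ 1 := by
      rw [abs_le]
      constructor
      · rw [Real.le_log_iff_exp_le hs0]
        linarith [exp_neg_one_le]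
      · have := Real.log_le_sub_one_of_pos hs0; linarith
    have hsη : s * η' = π * t := by
      rw [hη'def]; field_simp
    -- the error identity
    have hE : fFun (vsBayesRisk δ₁) π t + δ₁*π*Real.log π*(1-t)
        = (vsBayesRisk δ₁ π + δ₁*π*Real.log π)
          - s*(vsBayesRisk δ₁ η' + δ₁*η'*Real.log η')
          + δ₁*π*t*(Real.log t - Real.log s) := by
      simp only [fFun]
      rw [← hsdef, ← hη'def]
      linear_combination (δ₁ * Real.log η') * hsη + (δ₁ * π * t) * hlogη'
    -- bound the error
    have habsE : |fFun (vsBayesRisk δ₁) π t + δ₁*π*Real.log π*(1-t)| ≤ π * C₀ := by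
      rw [hE]
      have h1 : |(vsBayesRisk δ₁ π + δ₁*π*Real.log π)
          - s*(vsBayesRisk δ₁ η' + δ₁*η'*Real.log η')
          + δ₁*π*t*(Real.log t - Real.log s)|
          ≤ |vsBayesRisk δ₁ π + δ₁*π*Real.log π|
            + s * |vsBayesRisk δ₁ η' + δ₁*η'*Real.log η'|
            + δ₁*π*t*(|Real.log t| + |Real.log s|) := by
        have a1 := abs_add_le ((vsBayesRisk δ₁ π + δ₁*π*Real.log π)
          - s*(vsBayesRisk δ₁ η' + δ₁*η'*Real.log η'))
          (δ₁*π*t*(Real.log t - Real.log s))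
        have a2 := abs_sub (vsBayesRisk δ₁ π + δ₁*π*Real.log π)
          (s*(vsBayesRisk δ₁ η' + δ₁*η'*Real.log η'))
        have a3 : |s*(vsBayesRisk δ₁ η' + δ₁*η'*Real.log η')|
            = s * |vsBayesRisk δ₁ η' + δ₁*η'*Real.log η'| := by
          rw [abs_mul, abs_of_pos hs0]
        have a4 : |δ₁*π*t*(Real.log t - Real.log s)|
            ≤ δ₁*π*t*(|Real.log t| + |Real.log s|) := by
          rw [abs_mul]
          have : |δ₁*π*t| = δ₁*π*t := abs_of_pos (by positivity)
          rw [this]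
          exact mul_le_mul_of_nonneg_left (abs_sub (Real.log t) (Real.log s))
            (by positivity)
        calc |(vsBayesRisk δ₁ π + δ₁*π*Real.log π)
            - s*(vsBayesRisk δ₁ η' + δ₁*η'*Real.log η')
            + δ₁*π*t*(Real.log t - Real.log s)|
            ≤ |(vsBayesRisk δ₁ π + δ₁*π*Real.log π)
              - s*(vsBayesRisk δ₁ η' + δ₁*η'*Real.log η')|
              + |δ₁*π*t*(Real.log t - Real.log s)| := a1
          _ ≤ _ := by rw [a3] at a2; linarith
      have h2 : s * |vsBayesRisk δ₁ η' + δ₁*η'*Real.log η'| ≤ 3 * (π * t) := by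
        calc s * |vsBayesRisk δ₁ η' + δ₁*η'*Real.log η'| ≤ s * (3 * η') := by
              exact mul_le_mul_of_nonneg_left e₂ hs0.le
          _ = 3 * (π * t) := by rw [← hsη]; ring
      have h3 : δ₁*π*t*(|Real.log t| + |Real.log s|) ≤ π*t*(|Real.log t| + 1) := by
        have hb : |Real.log t| + |Real.log s| ≤ |Real.log t| + 1 := by linarith
        have : δ₁*π*t*(|Real.log t| + |Real.log s|) ≤ δ₁*π*t*(|Real.log t| + 1) := by
          apply mul_le_mul_of_nonneg_left hb (by positivity)
        have h4 : δ₁*π*t*(|Real.log t| + 1) ≤ 1*(π*t*(|Real.log t| + 1)) := by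
          have : 0 ≤ π*t*(|Real.log t| + 1) := by positivity
          nlinarith
        linarith
      calc _ ≤ _ := h1
        _ ≤ 3*π + 3*(π*t) + π*t*(|Real.log t| + 1) := by linarith
        _ = π * C₀ := by rw [hC₀def]; ring
    -- now divide
    have hd_ne : -δ₁*π*Real.log π*(1-t) ≠ 0 := by
      apply mul_ne_zero (mul_ne_zero (mul_ne_zero (by linarith) (ne_of_gt hπ0))
        (ne_of_lt hlogπ_neg)) ht1'
    have hd_abs : |(-δ₁*π*Real.log π*(1-t))| = δ₁*π*(-Real.log π)*|1-t| := by
      rw [abs_mul, abs_mul, abs_mul, abs_of_pos hπ0, abs_of_neg hlogπ_neg,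
        abs_of_neg (show -δ₁ < 0 by linarith)]
      ring
    rw [div_sub_one hd_ne, abs_div]
    have hnum : fFun (vsBayesRisk δ₁) π t - -δ₁*π*Real.log π*(1-t)
        = fFun (vsBayesRisk δ₁) π t + δ₁*π*Real.log π*(1-t) := by ring
    rw [hnum, hd_abs]
    have heq : (C₀/(δ₁*|1-t|)) * (-Real.log π)⁻¹
        = (π * C₀) / (δ₁*π*(-Real.log π)*|1-t|) := by
      rw [show δ₁*π*(-Real.log π)*|1-t| = π * (δ₁*(-Real.log π)*|1-t|) by ring,
        show π * C₀ = π * C₀ by rfl, mul_div_mul_left _ _ hπ0.ne']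
      simp only [div_eq_mul_inv, mul_inv]
      ring
    rw [heq]
    have hmlog : 0 < -Real.log π := by linarith
    have hdpos : 0 < δ₁*π*(-Real.log π)*|1-t| :=
      mul_pos (mul_pos (mul_pos hδ0 hπ0) hmlog) habs1t
    exact (div_le_div_iff_of_pos_right hdpos).mpr habsE
  -- the bound tends to zero
  have h1 : Tendsto (fun π:ℝ => -Real.log π) (𝓝[>](0:ℝ)) atTop :=
    tendsto_neg_atBot_iff.mp (by simpa using Real.tendsto_log_nhdsGT_zero)
  have h2 : Tendsto (fun π:ℝ => (C₀/(δ₁*|1-t|)) * (-Real.log π)⁻¹) (𝓝[>](0:ℝ)) (𝓝 0) := by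
    have := (h1.inv_tendsto_atTop).const_mul (C₀/(δ₁*|1-t|))
    simpa using this
  have hev : ∀ᶠ π in 𝓝[>](0:ℝ),
      ‖fFun (vsBayesRisk δ₁) π t / (-δ₁*π*Real.log π*(1-t)) - 1‖
        ≤ (C₀/(δ₁*|1-t|)) * (-Real.log π)⁻¹ := by
    filter_upwards [Ioo_mem_nhdsGT_of_mem (Set.mem_Ico.mpr ⟨le_refl (0:ℝ), hεpos⟩)] with π hπ
    simpa [Real.norm_eq_abs] using key π hπ
  have h0 := squeeze_zero_norm' hev h2
  have := h0.add_const 1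
  simpa using this
end

section
/- Let P and Q be probability measures on a measurable space X with P absolutely continuous with respect to Q, let p = dP/dQ be a Radon–Nikodym derivative, let π ∈ (0,1), and set η(x) = π p(x) / (π p(x) + 1 − π). Let L̄ : [0,1] → ℝ be a bounded measurable function (a pointwise Bayes risk). Then the statistical information L̄(π) − ∫_X L̄(η(x)) d(πP + (1−π)Q)(x) equals ∫_X f^π(p(x)) dQ(x), where f^π(t) = L̄(π) − (πt + 1 − π)·L̄(πt/(πt + 1 − π)). -/
open MeasureTheory ENNReal

/-! The mixture `π P + (1 - π) Q` has density `π p + 1 - π` with respect to `Q`, so integrating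
`L ∘ η` against it is integrating `(π p + 1 - π) · L ∘ η` against `Q`; since `Q` is a
probability measure, `L(π)` may be moved under the integral. Boundedness of `L` on
`[0, 1] ∋ η(x)` supplies every integrability condition. -/

lemma mul_div_mul_add_sub_mem_Icc {π t : ℝ} (hπ : π ∈ Set.Icc (0 : ℝ) 1) (ht : 0 ≤ t) :
    π * t / (π * t + 1 - π) ∈ Set.Icc (0 : ℝ) 1 := by
  have hπt : 0 ≤ π * t := mul_nonneg hπ.1 ht
  have hden : π * t ≤ π * t + 1 - π := by linarith [hπ.2]
  exact ⟨div_nonneg hπt (hπt.trans hden), div_le_one_of_le₀ hden (hπt.trans hden)⟩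

section WithDensity

variable {X : Type*} [MeasurableSpace X] {μ : Measure X}

lemma smul_withDensity_ofReal_add_smul {p : X → ℝ} (hp : ∀ x, 0 ≤ p x) {a b : ℝ}
    (ha : 0 ≤ a) (hb : 0 ≤ b) :
    ENNReal.ofReal a • μ.withDensity (fun x => ENNReal.ofReal (p x)) + ENNReal.ofReal b • μ =
      μ.withDensity fun x => ENNReal.ofReal (a * p x + b) := by
  rw [← withDensity_smul' _ _ ofReal_ne_top, ← withDensity_const,
    ← withDensity_add_right _ measurable_const]
  congr 1
  funext x
  simp only [Pi.add_apply, Pi.smul_apply, smul_eq_mul]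
  rw [ofReal_add (mul_nonneg ha (hp x)) hb, ofReal_mul ha]

lemma integrable_withDensity_ofReal_iff {w : X → ℝ} (hw : Measurable w)
    (hw_nonneg : ∀ x, 0 ≤ w x) {g : X → ℝ} :
    Integrable g (μ.withDensity fun x => ENNReal.ofReal (w x)) ↔
      Integrable (fun x => w x * g x) μ := by
  rw [integrable_withDensity_iff_integrable_smul' hw.ennreal_ofReal
    (.of_forall fun _ => ofReal_lt_top)]
  simp only [toReal_ofReal (hw_nonneg _), smul_eq_mul]

lemma integral_withDensity_ofReal {w : X → ℝ} (hw : Measurable w) (hw_nonneg : ∀ x, 0 ≤ w x)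
    (g : X → ℝ) :
    ∫ x, g x ∂μ.withDensity (fun x => ENNReal.ofReal (w x)) = ∫ x, w x * g x ∂μ := by
  rw [integral_withDensity_eq_integral_toReal_smul hw.ennreal_ofReal
    (.of_forall fun _ => ofReal_lt_top)]
  simp only [toReal_ofReal (hw_nonneg _), smul_eq_mul]

end WithDensity

lemma const_sub_integral {X : Type*} [MeasurableSpace X] {μ : Measure X} [IsProbabilityMeasure μ]
    {f : X → ℝ} (hf : Integrable f μ) (c : ℝ) :
    c - ∫ x, f x ∂μ = ∫ x, (c - f x) ∂μ := by
  rw [integral_sub (integrable_const c) hf, integral_const, probReal_univ, one_smul]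

theorem statistical_information_eq_f_divergence_general
    {X : Type*} [MeasurableSpace X] (P Q : Measure X)
    [IsProbabilityMeasure P] [IsProbabilityMeasure Q]
    (p : X → ℝ) (hp_meas : Measurable p) (hp_nonneg : ∀ x, 0 ≤ p x)
    (hdens : P = Q.withDensity fun x => ENNReal.ofReal (p x))
    (π : ℝ) (hπ : π ∈ Set.Ioo (0 : ℝ) 1)
    (L : ℝ → ℝ) (hL_meas : Measurable L)
    (hL_bdd : ∃ M : ℝ, ∀ y ∈ Set.Icc (0 : ℝ) 1, |L y| ≤ M) :
    L π - ∫ x, L (π * p x / (π * p x + 1 - π))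
        ∂(ENNReal.ofReal π • P + ENNReal.ofReal (1 - π) • Q) =
      ∫ x, (L π - (π * p x + 1 - π) * L (π * p x / (π * p x + 1 - π))) ∂Q := by
  obtain ⟨M, hM⟩ := hL_bdd
  set g : X → ℝ := fun x => L (π * p x / (π * p x + 1 - π))
  have hg_meas : Measurable g := by unfold g; fun_prop
  have hg_bdd (ν : Measure X) : ∀ᵐ x ∂ν, ‖g x‖ ≤ M := .of_forall fun x =>
    hM _ (mul_div_mul_add_sub_mem_Icc (Set.Ioo_subset_Icc_self hπ) (hp_nonneg x))
  have hg_int (ν : Measure X) [IsFiniteMeasure ν] : Integrable g ν :=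
    .of_bound hg_meas.aestronglyMeasurable M (hg_bdd ν)
  have hg_int_mix : Integrable g (ENNReal.ofReal π • P + ENNReal.ofReal (1 - π) • Q) :=
    ((hg_int P).smul_measure ofReal_ne_top).add_measure ((hg_int Q).smul_measure ofReal_ne_top)
  have hmix : ENNReal.ofReal π • P + ENNReal.ofReal (1 - π) • Q =
      Q.withDensity fun x => ENNReal.ofReal (π * p x + 1 - π) := by
    rw [hdens, smul_withDensity_ofReal_add_smul hp_nonneg hπ.1.le (sub_nonneg.2 hπ.2.le)]
    simp only [add_sub_assoc]
  have hw : Measurable fun x => π * p x + 1 - π := by fun_prop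
  have hw_nonneg (x : X) : 0 ≤ π * p x + 1 - π := by nlinarith [hp_nonneg x, hπ.1, hπ.2]
  rw [hmix, integrable_withDensity_ofReal_iff hw hw_nonneg] at hg_int_mix
  rw [hmix, integral_withDensity_ofReal hw hw_nonneg, const_sub_integral hg_int_mix]

/-- Let `P` and `Q` be probability measures on `X` with `P ≪ Q` and density
`p = dP/dQ`, let `π ∈ (0,1)`, and set `η(x) = π p(x)/(π p(x) + 1 - π)`. For a
bounded measurable pointwise Bayes risk `L` on `[0,1]`, the statistical
information `L(π) - ∫ L(η(x)) d(πP + (1-π)Q)` equals the f-divergence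
`∫ f^π(p(x)) dQ`, where `f^π(t) = L(π) - (π t + 1 - π) L(π t/(π t + 1 - π))`. -/
theorem statistical_information_eq_f_divergence
    {X : Type*} [MeasurableSpace X] (P Q : Measure X)
    [IsProbabilityMeasure P] [IsProbabilityMeasure Q]
    (hPQ : P ≪ Q)
    (p : X → ℝ) (hp_meas : Measurable p) (hp_nonneg : ∀ x, 0 ≤ p x)
    (hdens : P = Q.withDensity fun x => ENNReal.ofReal (p x))
    (π : ℝ) (hπ : π ∈ Set.Ioo (0 : ℝ) 1)
    (L : ℝ → ℝ) (hL_meas : Measurable L)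
    (hL_bdd : ∃ M : ℝ, ∀ y ∈ Set.Icc (0 : ℝ) 1, |L y| ≤ M) :
    L π - ∫ x, L (π * p x / (π * p x + 1 - π))
        ∂(ENNReal.ofReal π • P + ENNReal.ofReal (1 - π) • Q) =
      ∫ x, (L π - (π * p x + 1 - π) * L (π * p x / (π * p x + 1 - π))) ∂Q :=
  statistical_information_eq_f_divergence_general P Q p hp_meas hp_nonneg hdens π hπ L hL_meas
    hL_bdd
end

section
/- Let S be a symmetric positive definite n×n real matrix and let m be a nonzero vector in ℝⁿ. Then for every nonzero w ∈ ℝⁿ, (w·m)/√(wᵀSw) ≤ √(mᵀS⁻¹m), with equality if and only if w = c·S⁻¹m for some c > 0. Consequently, among all linear classifiers on two independent Gaussian classes x₊ ∼ N(μ₊,Σ₊) and x₋ ∼ N(μ₋,Σ₋) with Σ₊+Σ₋ positive definite and μ₊ ≠ μ₋, the AUC value Φ(w·(μ₊−μ₋)/√(wᵀ(Σ₊+Σ₋)w)) is maximized exactly by w = c·(Σ₊+Σ₋)⁻¹(μ₊−μ₋) with c > 0. -/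
open Matrix MeasureTheory ProbabilityTheory

/-! With `v = S⁻¹ m` one has `w ⬝ m = wᵀ S v`, so the ratio is the `S`-inner product of `w` and
`v` divided by the `S`-norm of `w`. Cauchy–Schwarz for this inner product bounds it by the
`S`-norm of `v`, which is `√(mᵀ S⁻¹ m)`, with equality exactly for positive multiples of `v`.
The AUC statement follows because the standard normal cdf is strictly increasing. -/

namespace Matrix

variable {ι : Type*} [Fintype ι] {S : Matrix ι ι ℝ}

lemma IsSymm.dotProduct_mulVec_comm (hS : S.IsSymm) (x y : ι → ℝ) :
    x ⬝ᵥ S *ᵥ y = y ⬝ᵥ S *ᵥ x := by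
  rw [dotProduct_mulVec, ← mulVec_transpose, hS.eq, dotProduct_comm]

lemma PosSemidef.dotProduct_mulVec_le_sqrt_mul_sqrt (hS : S.PosSemidef) (x y : ι → ℝ) :
    x ⬝ᵥ S *ᵥ y ≤ √(x ⬝ᵥ S *ᵥ x) * √(y ⬝ᵥ S *ᵥ y) := by
  classical
  have hcs := S.toBilin'.apply_mul_apply_le_of_forall_zero_le
    (fun z => by simpa [toBilin'_apply'] using hS.dotProduct_mulVec_nonneg z) x y
  have hsymm : S.IsSymm := isHermitian_iff_isSymm.mp hS.isHermitian
  simp only [toBilin'_apply', hsymm.dotProduct_mulVec_comm y x, ← sq] at hcs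
  rw [← Real.sqrt_mul (by simpa using hS.dotProduct_mulVec_nonneg x)]
  exact Real.le_sqrt_of_sq_le hcs

lemma PosDef.eq_smul_of_dotProduct_mulVec_eq_sqrt_mul_sqrt (hS : S.PosDef) {x y : ι → ℝ}
    (hy : y ≠ 0) (h : x ⬝ᵥ S *ᵥ y = √(x ⬝ᵥ S *ᵥ x) * √(y ⬝ᵥ S *ᵥ y)) :
    x = (x ⬝ᵥ S *ᵥ y / y ⬝ᵥ S *ᵥ y) • y := by
  classical
  have hyy : 0 < y ⬝ᵥ S *ᵥ y := by simpa using hS.dotProduct_mulVec_pos hy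
  have hxx : 0 ≤ x ⬝ᵥ S *ᵥ x := by simpa using hS.posSemidef.dotProduct_mulVec_nonneg x
  have hsymm : S.IsSymm := isHermitian_iff_isSymm.mp hS.isHermitian
  have hsq : (y ⬝ᵥ S *ᵥ x) * (x ⬝ᵥ S *ᵥ y) = (y ⬝ᵥ S *ᵥ y) * (x ⬝ᵥ S *ᵥ x) := by
    rw [hsymm.dotProduct_mulVec_comm y x, h,
      mul_mul_mul_comm, Real.mul_self_sqrt hxx, Real.mul_self_sqrt hyy.le, mul_comm]
  -- Lagrange's identity: `z ⬝ S z = ⟪y,y⟫ (⟪y,y⟫⟪x,x⟫ - ⟪y,x⟫⟪x,y⟫)`, which vanishes by `hsq`.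
  set z := (y ⬝ᵥ S *ᵥ x) • y - (y ⬝ᵥ S *ᵥ y) • x
  have hz : z ⬝ᵥ S *ᵥ z = 0 := by
    have := S.toBilin'.apply_smul_sub_smul_sub_eq y x
    simp only [toBilin'_apply'] at this
    rw [this, hsq, sub_self, mul_zero]
  have hz0 : z = 0 := by
    by_contra hne
    simpa [hz] using hS.dotProduct_mulVec_pos hne
  rw [sub_eq_zero, hsymm.dotProduct_mulVec_comm y x] at hz0
  rw [div_eq_inv_mul, mul_smul, hz0, smul_smul, inv_mul_cancel₀ hyy.ne', one_smul]

variable [DecidableEq ι]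

lemma PosDef.mulVec_inv_mulVec (hS : S.PosDef) (m : ι → ℝ) : S *ᵥ (S⁻¹ *ᵥ m) = m := by
  rw [mulVec_mulVec, mul_nonsing_inv _ hS.det_pos.ne'.isUnit, one_mulVec]

lemma PosDef.inv_mulVec_dotProduct_mulVec (hS : S.PosDef) (m : ι → ℝ) :
    (S⁻¹ *ᵥ m) ⬝ᵥ S *ᵥ (S⁻¹ *ᵥ m) = m ⬝ᵥ S⁻¹ *ᵥ m := by
  rw [hS.mulVec_inv_mulVec, dotProduct_comm]

lemma PosDef.dotProduct_div_sqrt_le (hS : S.PosDef) (m w : ι → ℝ) :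
    w ⬝ᵥ m / √(w ⬝ᵥ S *ᵥ w) ≤ √(m ⬝ᵥ S⁻¹ *ᵥ m) := by
  refine div_le_of_le_mul₀ (Real.sqrt_nonneg _) (Real.sqrt_nonneg _) ?_
  calc w ⬝ᵥ m = w ⬝ᵥ S *ᵥ (S⁻¹ *ᵥ m) := by rw [hS.mulVec_inv_mulVec]
    _ ≤ √(w ⬝ᵥ S *ᵥ w) * √((S⁻¹ *ᵥ m) ⬝ᵥ S *ᵥ (S⁻¹ *ᵥ m)) :=
      hS.posSemidef.dotProduct_mulVec_le_sqrt_mul_sqrt _ _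
    _ = √(m ⬝ᵥ S⁻¹ *ᵥ m) * √(w ⬝ᵥ S *ᵥ w) := by
      rw [hS.inv_mulVec_dotProduct_mulVec, mul_comm]

lemma PosDef.inv_mulVec_dotProduct_div_sqrt (hS : S.PosDef) (m : ι → ℝ) :
    (S⁻¹ *ᵥ m) ⬝ᵥ m / √((S⁻¹ *ᵥ m) ⬝ᵥ S *ᵥ (S⁻¹ *ᵥ m)) = √(m ⬝ᵥ S⁻¹ *ᵥ m) := by
  rw [hS.inv_mulVec_dotProduct_mulVec, dotProduct_comm, Real.div_sqrt]

lemma PosDef.dotProduct_div_sqrt_eq_iff (hS : S.PosDef) {m w : ι → ℝ} (hm : m ≠ 0)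
    (hw : w ≠ 0) :
    w ⬝ᵥ m / √(w ⬝ᵥ S *ᵥ w) = √(m ⬝ᵥ S⁻¹ *ᵥ m) ↔ ∃ c : ℝ, 0 < c ∧ w = c • S⁻¹ *ᵥ m := by
  set v := S⁻¹ *ᵥ m
  have hv : v ≠ 0 := fun h => hm <| by
    rw [← hS.mulVec_inv_mulVec m, show S⁻¹ *ᵥ m = 0 from h, mulVec_zero]
  have hww : 0 < w ⬝ᵥ S *ᵥ w := by simpa using hS.dotProduct_mulVec_pos hw
  have hvv : 0 < v ⬝ᵥ S *ᵥ v := by simpa using hS.dotProduct_mulVec_pos hv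
  have hwm : w ⬝ᵥ m = w ⬝ᵥ S *ᵥ v := by rw [hS.mulVec_inv_mulVec]
  rw [div_eq_iff (Real.sqrt_pos.mpr hww).ne', ← hS.inv_mulVec_dotProduct_mulVec, hwm, mul_comm]
  constructor
  · intro h
    refine ⟨_, div_pos ?_ hvv, hS.eq_smul_of_dotProduct_mulVec_eq_sqrt_mul_sqrt hv h⟩
    rw [h]
    positivity
  · rintro ⟨c, hc, rfl⟩
    simp only [dotProduct_smul, smul_dotProduct, mulVec_smul, smul_eq_mul]
    rw [← mul_assoc, Real.sqrt_mul (mul_self_nonneg c), Real.sqrt_mul_self hc.le, mul_assoc,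
      Real.mul_self_sqrt hvv.le]

end Matrix

namespace ProbabilityTheory

theorem strictMono_cdf_of_absolutelyContinuous {μ : Measure ℝ} [IsProbabilityMeasure μ]
    (h : volume ≪ μ) : StrictMono (cdf μ) := by
  intro x y hxy
  by_contra! hle
  have hIoc : μ (Set.Ioc x y) = 0 := by
    rw [← measure_cdf μ, StieltjesFunction.measure_Ioc, ENNReal.ofReal_eq_zero]
    linarith
  have := h hIoc
  simp only [Real.volume_Ioc, ENNReal.ofReal_eq_zero] at this
  linarith

theorem strictMono_cdf_gaussianReal (μ : ℝ) {v : NNReal} (hv : v ≠ 0) :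
    StrictMono (cdf (gaussianReal μ v)) :=
  strictMono_cdf_of_absolutelyContinuous (gaussianReal_absolutelyContinuous' μ hv)

end ProbabilityTheory

/-- Let `S` be a symmetric positive definite `n × n` real matrix and `m ≠ 0`
a vector in `ℝⁿ`. Then for every nonzero `w`,
`(w ⬝ m)/√(wᵀ S w) ≤ √(mᵀ S⁻¹ m)`, with equality iff `w = c • S⁻¹ m` for some
`c > 0`. Consequently, among all linear classifiers on two independent
Gaussian classes `x₊ ∼ N(μ₊, Σ₊)`, `x₋ ∼ N(μ₋, Σ₋)` with `Σ₊ + Σ₋` positive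
definite and `μ₊ ≠ μ₋`, the AUC value
`Φ(w ⬝ (μ₊ - μ₋)/√(wᵀ (Σ₊+Σ₋) w))` (with `Φ` the standard normal CDF) is
maximized exactly by `w = c • (Σ₊+Σ₋)⁻¹ (μ₊ - μ₋)` with `c > 0`. -/
theorem quadratic_ratio_max_and_optimal_AUC
    (n : ℕ) (S : Matrix (Fin n) (Fin n) ℝ) (hS : S.PosDef)
    (m : Fin n → ℝ) (hm : m ≠ 0) :
    (∀ w : Fin n → ℝ, w ≠ 0 →
      (w ⬝ᵥ m) / Real.sqrt (w ⬝ᵥ S.mulVec w) ≤ Real.sqrt (m ⬝ᵥ S⁻¹.mulVec m) ∧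
      ((w ⬝ᵥ m) / Real.sqrt (w ⬝ᵥ S.mulVec w) = Real.sqrt (m ⬝ᵥ S⁻¹.mulVec m) ↔
        ∃ c : ℝ, 0 < c ∧ w = c • S⁻¹.mulVec m)) ∧
    (∀ (Sp Sm : Matrix (Fin n) (Fin n) ℝ) (μp μm : Fin n → ℝ),
      (Sp + Sm).PosDef → μp ≠ μm →
      ∀ w : Fin n → ℝ, w ≠ 0 →
        cdf (gaussianReal 0 1)
            (w ⬝ᵥ (μp - μm) / Real.sqrt (w ⬝ᵥ (Sp + Sm).mulVec w)) ≤
          cdf (gaussianReal 0 1)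
            ((Sp + Sm)⁻¹.mulVec (μp - μm) ⬝ᵥ (μp - μm) /
              Real.sqrt ((Sp + Sm)⁻¹.mulVec (μp - μm) ⬝ᵥ
                (Sp + Sm).mulVec ((Sp + Sm)⁻¹.mulVec (μp - μm)))) ∧
        (cdf (gaussianReal 0 1)
            (w ⬝ᵥ (μp - μm) / Real.sqrt (w ⬝ᵥ (Sp + Sm).mulVec w)) =
          cdf (gaussianReal 0 1)
            ((Sp + Sm)⁻¹.mulVec (μp - μm) ⬝ᵥ (μp - μm) /
              Real.sqrt ((Sp + Sm)⁻¹.mulVec (μp - μm) ⬝ᵥ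
                (Sp + Sm).mulVec ((Sp + Sm)⁻¹.mulVec (μp - μm)))) ↔
          ∃ c : ℝ, 0 < c ∧ w = c • (Sp + Sm)⁻¹.mulVec (μp - μm))) := by
  refine ⟨fun w hw => ⟨hS.dotProduct_div_sqrt_le m w, hS.dotProduct_div_sqrt_eq_iff hm hw⟩, ?_⟩
  intro Sp Sm μp μm hPD hμ w hw
  have hΦ := strictMono_cdf_gaussianReal 0 one_ne_zero
  rw [hPD.inv_mulVec_dotProduct_div_sqrt, hΦ.le_iff_le, hΦ.injective.eq_iff]
  exact ⟨hPD.dotProduct_div_sqrt_le _ w, hPD.dotProduct_div_sqrt_eq_iff (sub_ne_zero.mpr hμ) hw⟩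
end
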